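/- arXiv:math/0112194 — 11 statements merged into one kernel-verified Lean document; each statement's English description precedes it below -/
import Mathlib

section
/- Let (α_n)_{n≥1} and (β_n)_{n≥1} be complex numbers and let (P_n)_{n≥0} be the monic polynomials in ℂ[x] defined by P_{-1} = 0, P_0 = 1 and P_{n+1}(x) = (x − α_{n+1}) P_n(x) − β_n P_{n−1}(x) for n ≥ 0. Suppose there exist formal power series u(z) and g(z) over ℂ with u(0) = 0, u'(0) = 1 and g(0) = 1 such that (g(z) − x·u(z)) · Σ_{n≥0} P_n(x) z^n = 1 in the ring ℂ[x][[z]] of formal power series in z with polynomial coefficients. Then the recursion coefficients are constant from the second step on: α_n = α_2 for all n ≥ 2 and β_n = β_2 for all n ≥ 2. -/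
/-!
Comparing coefficients of `z^n x^(j+1)` in `(g - x u) · Σ P_n z^n = 1` gives, for every `n ≥ 1`,
`Σ_k (g_(n-k) [x^(j+1)] P_k - u_(n-k) [x^j] P_k) = 0`. Since `P_k` is monic of degree `k`, for
`n = j + 2` and `n = j + 3` only the top two or three coefficients of the last few `P_k` survive,
and the recurrence expresses these through `α` and `β`. This yields `α_(j+2) = g_1 - u_2` and
`β_(j+2) = g_2 - u_3 - u_2 α_(j+2)`, independently of `j`.
-/

open Polynomial Finset

theorem sum_coeff_eq_zero_of_mul_mk_eq_one {R : Type*} [CommRing R] {P : ℕ → R[X]}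
    {u g : PowerSeries R}
    (hgen : (PowerSeries.map (C : R →+* R[X]) g - PowerSeries.C (R := R[X]) X *
        PowerSeries.map (C : R →+* R[X]) u) * PowerSeries.mk P = 1)
    {n : ℕ} (hn : n ≠ 0) (j : ℕ) :
    ∑ k ∈ range (n + 1), (PowerSeries.coeff (n - k) g * (P k).coeff (j + 1)
      - PowerSeries.coeff (n - k) u * (P k).coeff j) = 0 := by
  have h := congrArg (fun F => (PowerSeries.coeff n F).coeff (j + 1)) hgen
  simp only [mul_comm _ (PowerSeries.mk P), PowerSeries.coeff_mul, PowerSeries.coeff_one,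
    if_neg hn, coeff_zero, Nat.sum_antidiagonal_eq_sum_range_succ_mk, finsetSum_coeff] at h
  rw [← h]
  refine sum_congr rfl fun k _ => ?_
  rw [PowerSeries.coeff_mk, map_sub, PowerSeries.coeff_map, PowerSeries.coeff_C_mul,
    PowerSeries.coeff_map, mul_sub, coeff_sub, mul_left_comm, coeff_X_mul, coeff_mul_C,
    coeff_mul_C]
  ring

structure IsThreeTermRecurrence {R : Type*} [CommRing R] (α β : ℕ → R) (P : ℕ → R[X]) :
    Prop where
  zero : P 0 = 1
  one : P 1 = X - C (α 1)
  add_two : ∀ n, P (n + 2) = (X - C (α (n + 2))) * P (n + 1) - C (β (n + 1)) * P n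

namespace IsThreeTermRecurrence

variable {R : Type*} [CommRing R] {α β : ℕ → R} {P : ℕ → R[X]}

theorem coeff_add_two (h : IsThreeTermRecurrence α β P) (n j : ℕ) :
    (P (n + 2)).coeff (j + 1) = (P (n + 1)).coeff j - α (n + 2) * (P (n + 1)).coeff (j + 1)
      - β (n + 1) * (P n).coeff (j + 1) := by
  rw [h.add_two, coeff_sub, coeff_X_sub_C_mul, coeff_C_mul]

theorem coeff_eq_zero_of_lt (h : IsThreeTermRecurrence α β P) :
    ∀ n j, n < j → (P n).coeff j = 0 := by
  refine Nat.twoStepInduction ?_ ?_ fun n ih₀ ih₁ j hj => ?_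
  · intro j hj
    rw [h.zero, coeff_one, if_neg hj.ne']
  · intro j hj
    rw [h.one, coeff_sub, coeff_X, coeff_C, if_neg hj.ne, if_neg (by omega), sub_zero]
  · obtain ⟨j, rfl⟩ : ∃ i, j = i + 1 := ⟨j - 1, by omega⟩
    rw [h.coeff_add_two, ih₀ _ (by omega), ih₁ j (by omega), ih₁ (j + 1) (by omega)]
    ring

theorem coeff_self (h : IsThreeTermRecurrence α β P) : ∀ n, (P n).coeff n = 1 := by
  refine Nat.twoStepInduction ?_ ?_ fun n _ ih₁ => ?_
  · simp [h.zero]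
  · simp [h.one]
  · rw [h.coeff_add_two, ih₁, h.coeff_eq_zero_of_lt (n + 1) (n + 2) (by omega),
      h.coeff_eq_zero_of_lt n (n + 2) (by omega)]
    ring

theorem sum_range_coeff_eq_zero (h : IsThreeTermRecurrence α β P) (a b : ℕ → R) (m : ℕ) :
    ∑ k ∈ range m, (a k * (P k).coeff (m + 1) - b k * (P k).coeff m) = 0 :=
  sum_eq_zero fun k hk => by
    have hkm := mem_range.1 hk
    rw [h.coeff_eq_zero_of_lt k (m + 1) (by omega), h.coeff_eq_zero_of_lt k m hkm, mul_zero,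
      mul_zero, sub_zero]

variable {u g : PowerSeries R}

theorem alpha_add_two (h : IsThreeTermRecurrence α β P)
    (hu0 : PowerSeries.constantCoeff u = 0) (hu1 : PowerSeries.coeff 1 u = 1)
    (hg0 : PowerSeries.constantCoeff g = 1)
    (hgen : (PowerSeries.map (C : R →+* R[X]) g - PowerSeries.C (R := R[X]) X *
        PowerSeries.map (C : R →+* R[X]) u) * PowerSeries.mk P = 1) (m : ℕ) :
    α (m + 2) = PowerSeries.coeff 1 g - PowerSeries.coeff 2 u := by
  have hsum := sum_coeff_eq_zero_of_mul_mk_eq_one hgen (n := m + 2) (by omega) m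
  rw [sum_range_succ, sum_range_succ, sum_range_succ, h.sum_range_coeff_eq_zero, zero_add] at hsum
  simp only [show m + 2 - m = 2 by omega, show m + 2 - (m + 1) = 1 by omega, Nat.sub_self,
    PowerSeries.coeff_zero_eq_constantCoeff_apply, hu0, hg0, hu1, h.coeff_self,
    h.coeff_eq_zero_of_lt m (m + 1) (by omega), h.coeff_add_two m m] at hsum
  linear_combination -hsum

theorem beta_add_two (h : IsThreeTermRecurrence α β P)
    (hu0 : PowerSeries.constantCoeff u = 0) (hu1 : PowerSeries.coeff 1 u = 1)
    (hg0 : PowerSeries.constantCoeff g = 1)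
    (hgen : (PowerSeries.map (C : R →+* R[X]) g - PowerSeries.C (R := R[X]) X *
        PowerSeries.map (C : R →+* R[X]) u) * PowerSeries.mk P = 1) (m : ℕ) :
    β (m + 2) = PowerSeries.coeff 2 g - PowerSeries.coeff 3 u
      - PowerSeries.coeff 2 u * α (m + 2) := by
  have hsum := sum_coeff_eq_zero_of_mul_mk_eq_one hgen (n := m + 3) (by omega) m
  rw [sum_range_succ, sum_range_succ, sum_range_succ, sum_range_succ, h.sum_range_coeff_eq_zero,
    zero_add] at hsum
  simp only [show m + 3 - m = 3 by omega, show m + 3 - (m + 1) = 2 by omega,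
    show m + 3 - (m + 2) = 1 by omega, Nat.sub_self,
    PowerSeries.coeff_zero_eq_constantCoeff_apply, hu0, hg0, hu1, h.coeff_self,
    h.coeff_eq_zero_of_lt m (m + 1) (by omega), h.coeff_add_two (m + 1) m,
    h.coeff_add_two m m, h.alpha_add_two hu0 hu1 hg0 hgen (m + 1)] at hsum
  linear_combination -hsum

end IsThreeTermRecurrence

/-- If the monic orthogonal-polynomial-type recursion
`P_{n+1} = (x - α_{n+1}) P_n - β_n P_{n-1}` (with `P_{-1} = 0`, `P_0 = 1`) has a generating
function of the form `1 / (g(z) - x u(z))` with `u(0) = 0`, `u'(0) = 1`, `g(0) = 1`, then the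
recursion coefficients are constant from the second step on. -/
theorem stmt_0 (α β : ℕ → ℂ) (P : ℕ → Polynomial ℂ)
    (hP0 : P 0 = 1)
    (hP1 : P 1 = Polynomial.X - Polynomial.C (α 1))
    (hPrec : ∀ n, P (n + 2) =
      (Polynomial.X - Polynomial.C (α (n + 2))) * P (n + 1) - Polynomial.C (β (n + 1)) * P n)
    (u g : PowerSeries ℂ)
    (hu0 : PowerSeries.constantCoeff (R := ℂ) u = 0)
    (hu1 : PowerSeries.coeff (R := ℂ) 1 u = 1)
    (hg0 : PowerSeries.constantCoeff (R := ℂ) g = 1)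
    (hgen : (PowerSeries.map (Polynomial.C : ℂ →+* Polynomial ℂ) g -
        PowerSeries.C (R := Polynomial ℂ) Polynomial.X *
          PowerSeries.map (Polynomial.C : ℂ →+* Polynomial ℂ) u) *
        PowerSeries.mk (fun n => P n) = 1) :
    ∀ n, 2 ≤ n → α n = α 2 ∧ β n = β 2 := by
  have h : IsThreeTermRecurrence α β P := ⟨hP0, hP1, hPrec⟩
  intro n hn
  obtain ⟨m, rfl⟩ := Nat.exists_eq_add_of_le' hn
  have hα := h.alpha_add_two hu0 hu1 hg0 hgen
  have hβ := h.beta_add_two hu0 hu1 hg0 hgen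
  exact ⟨(hα m).trans (hα 0).symm, by rw [hβ m, hβ 0, hα m, hα 0]⟩
end

section
/- Let α, α', β, β' ∈ ℂ and let (P_n)_{n≥0} be the monic polynomials in ℂ[x] defined by P_0 = 1, P_1(x) = x − (α − α'), P_2(x) = (x − α) P_1(x) − (β − β') P_0(x), and P_{n+1}(x) = (x − α) P_n(x) − β P_{n−1}(x) for n ≥ 2. Then the following identity holds in ℂ[x][[z]]: (1 + α z + β z² − x z) · Σ_{n≥0} P_n(x) z^n = 1 + α' z + β' z². -/
open PowerSeries

theorem PowerSeries.one_add_C_mul_X_add_C_mul_X_sq_mul_mk {R : Type*} [CommRing R]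
    (u v u' v' : R) (p : ℕ → R) (h0 : p 0 = 1) (h1 : p 1 + u = u')
    (h2 : p 2 + u * p 1 + v * p 0 = v')
    (hrec : ∀ n, p (n + 3) + u * p (n + 2) + v * p (n + 1) = 0) :
    (1 + C u * X + C v * X ^ 2) * mk p = 1 + C u' * X + C v' * X ^ 2 := by
  ext n
  rcases n with _ | _ | _ | n <;>
    simp [add_mul, sq, mul_assoc, coeff_X, coeff_one, coeff_succ_X_mul, h0, ← h1, ← h2,
      hrec]

/-- the generating function identity
`(1 + α z + β z² − x z) · Σ P_n(x) zⁿ = 1 + α' z + β' z²` for the free Meixner type recursion. -/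
theorem stmt_1 (a a' b b' : ℂ) (P : ℕ → Polynomial ℂ)
    (hP0 : P 0 = 1)
    (hP1 : P 1 = Polynomial.X - Polynomial.C (a - a'))
    (hP2 : P 2 = (Polynomial.X - Polynomial.C a) * P 1 - Polynomial.C (b - b') * P 0)
    (hPrec : ∀ n, 2 ≤ n →
      P (n + 1) = (Polynomial.X - Polynomial.C a) * P n - Polynomial.C b * P (n - 1)) :
    (1 + PowerSeries.C (R := Polynomial ℂ) (Polynomial.C a) * PowerSeries.X
       + PowerSeries.C (R := Polynomial ℂ) (Polynomial.C b) * PowerSeries.X ^ 2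
       - PowerSeries.C (R := Polynomial ℂ) Polynomial.X * PowerSeries.X) *
      PowerSeries.mk (fun n => P n)
    = 1 + PowerSeries.C (R := Polynomial ℂ) (Polynomial.C a') * PowerSeries.X
        + PowerSeries.C (R := Polynomial ℂ) (Polynomial.C b') * PowerSeries.X ^ 2 := by
  have hlhs : 1 + C (Polynomial.C a) * X + C (Polynomial.C b) * X ^ 2 - C Polynomial.X * X
      = 1 + C (Polynomial.C a - Polynomial.X) * X
        + C (Polynomial.C b) * (X : (Polynomial ℂ)⟦X⟧) ^ 2 := by
    rw [map_sub]; ring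
  rw [hlhs]
  apply one_add_C_mul_X_add_C_mul_X_sq_mul_mk
  · exact hP0
  · rw [hP1, map_sub]; ring
  · rw [hP2, hP0, map_sub]; ring
  · intro n
    rw [hPrec (n + 2) le_add_self, show n + 2 - 1 = n + 1 from rfl]
    ring
end

section
/- Let α, α', β, β' ∈ ℂ. Define (P_n)_{n≥0} by P_0 = 1, P_1(x) = x − (α − α'), P_2(x) = (x − α) P_1(x) − (β − β') P_0(x), P_{n+1}(x) = (x − α) P_n(x) − β P_{n−1}(x) for n ≥ 2; and define (Q_n)_{n≥0} by Q_0 = 1, Q_1(x) = x − α, Q_{n+1}(x) = (x − α) Q_n(x) − β Q_{n−1}(x) for n ≥ 1. Then P_0 = Q_0, P_1 = Q_1 + α' Q_0, and P_n = Q_n + α' Q_{n−1} + β' Q_{n−2} for all n ≥ 2. -/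
/-- expression of the free Meixner polynomials in terms of the shifted
Chebyshev polynomials of the second kind. -/
theorem stmt_2 (a a' b b' : ℂ) (P Q : ℕ → Polynomial ℂ)
    (hP0 : P 0 = 1)
    (hP1 : P 1 = Polynomial.X - Polynomial.C (a - a'))
    (hP2 : P 2 = (Polynomial.X - Polynomial.C a) * P 1 - Polynomial.C (b - b') * P 0)
    (hPrec : ∀ n, 2 ≤ n →
      P (n + 1) = (Polynomial.X - Polynomial.C a) * P n - Polynomial.C b * P (n - 1))
    (hQ0 : Q 0 = 1)
    (hQ1 : Q 1 = Polynomial.X - Polynomial.C a)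
    (hQrec : ∀ n, 1 ≤ n →
      Q (n + 1) = (Polynomial.X - Polynomial.C a) * Q n - Polynomial.C b * Q (n - 1)) :
    P 0 = Q 0 ∧ P 1 = Q 1 + Polynomial.C a' * Q 0 ∧
      ∀ n, 2 ≤ n → P n = Q n + Polynomial.C a' * Q (n - 1) + Polynomial.C b' * Q (n - 2) := by
  have hQ2 : Q 2 = (Polynomial.X - Polynomial.C a) * Q 1 - Polynomial.C b * Q 0 :=
    hQrec 1 le_rfl
  have key : ∀ n, P (n + 2) = Q (n + 2) + Polynomial.C a' * Q (n + 1) + Polynomial.C b' * Q n := by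
    intro n
    induction n using Nat.twoStepInduction with
    | zero =>
      rw [hP2, hP1, hP0, hQ2, hQ1, hQ0]
      push_cast [Polynomial.C_sub]
      ring
    | one =>
      have h3 : P 3 = (Polynomial.X - Polynomial.C a) * P 2 - Polynomial.C b * P 1 :=
        hPrec 2 le_rfl
      have hQ3 : Q 3 = (Polynomial.X - Polynomial.C a) * Q 2 - Polynomial.C b * Q 1 :=
        hQrec 2 (by norm_num)
      rw [h3, hP2, hP1, hP0, hQ3, hQ2, hQ1, hQ0]
      push_cast [Polynomial.C_sub]
      ring
    | more n ih1 ih2 =>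
      have hP' : P (n + 4) = (Polynomial.X - Polynomial.C a) * P (n + 3)
          - Polynomial.C b * P (n + 2) := hPrec (n + 3) (by omega)
      have hQ4 : Q (n + 4) = (Polynomial.X - Polynomial.C a) * Q (n + 3)
          - Polynomial.C b * Q (n + 2) := hQrec (n + 3) (by omega)
      have hQ3' : Q (n + 3) = (Polynomial.X - Polynomial.C a) * Q (n + 2)
          - Polynomial.C b * Q (n + 1) := hQrec (n + 2) (by omega)
      have hQ2' : Q (n + 2) = (Polynomial.X - Polynomial.C a) * Q (n + 1)
          - Polynomial.C b * Q n := hQrec (n + 1) (by omega)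
      rw [show n + 2 + 2 = n + 4 from rfl, show n + 1 + 2 = n + 3 from rfl] at *
      rw [hP', ih2, ih1, hQ4, hQ3', hQ2']
      ring
  refine ⟨by rw [hP0, hQ0], by rw [hP1, hQ1, hQ0]; push_cast [Polynomial.C_sub]; ring, ?_⟩
  intro n hn
  obtain ⟨m, rfl⟩ : ∃ m, n = m + 2 := ⟨n - 2, by omega⟩
  simpa using key m
end

section
/- Let a ∈ ℂ and let R(z) be a formal power series over ℂ. Let v(z) = z·(1 + 2a z + z²)^{−1}, a formal power series with zero constant term. If the substitution of v into R satisfies R(v(z)) = a + z as formal power series, then R satisfies the quadratic identity z·(R(z) − a)² + (2a z − 1)·(R(z) − a) + z = 0 in the ring of formal power series over ℂ. -/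
/-!
Since `v = z + O(z²)`, it has a compositional inverse `Q` with `v(Q(z)) = z`. Substituting `Q`
into `R(v(z)) = a + z` gives `R = a + Q`, and `v(Q) = z` unfolds to `Q = z (1 + 2a Q + Q²)`,
which is the quadratic identity for `R - a`.
-/

open PowerSeries

/-- Substitution (composition) `R(v(z))` of a formal power series `v` with zero constant
term into a formal power series `R`, defined coefficientwise:
the `n`-th coefficient of `R(v)` is `Σ_{k=0}^{n} R_k · (coeff n of v^k)`
(the sum may be truncated at `k = n` since `v` has zero constant term). -/
noncomputable def psSubst (v R : PowerSeries ℂ) : PowerSeries ℂ :=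
  PowerSeries.mk fun n =>
    ∑ k ∈ Finset.range (n + 1), PowerSeries.coeff k R * PowerSeries.coeff n (v ^ k)

theorem psSubst_eq_subst {v : ℂ⟦X⟧} (hv : constantCoeff v = 0) (f : ℂ⟦X⟧) :
    psSubst v f = f.subst v := by
  obtain ⟨w, rfl⟩ := X_dvd_iff.mpr hv
  ext n
  rw [psSubst, coeff_mk, coeff_subst' (HasSubst.of_constantCoeff_zero' hv),
    finsum_eq_sum_of_support_subset (s := Finset.range (n + 1))]
  · simp only [smul_eq_mul]
  · intro k hk
    contrapose! hk
    simp_all [mul_pow, coeff_X_pow_mul']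

theorem subst_substInvOfIsUnit_subst {R : Type*} [CommRing R] {P : R⟦X⟧}
    (hP : constantCoeff P = 0) (hP' : IsUnit (coeff 1 P)) (f : R⟦X⟧) :
    subst (P.substInvOfIsUnit hP') (subst P f) = f := by
  rw [subst_comp_subst_apply (HasSubst.of_constantCoeff_zero' hP)
    (HasSubst.substInvOfIsUnit P hP'), subst_substInvOfIsUnit_right P hP hP', X_subst]

theorem X_mul_subst_eq_of_subst_X_mul_inv_eq_X {k : Type*} [Field k] {u Q : k⟦X⟧}
    (hu : constantCoeff u ≠ 0) (hQ : HasSubst Q) (h : (X * u⁻¹).subst Q = X) :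
    X * u.subst Q = Q := by
  have hinv : u.subst Q * u⁻¹.subst Q = 1 := by
    rw [← subst_mul hQ, PowerSeries.mul_inv_cancel u hu, ← coe_substAlgHom hQ, map_one]
  rw [subst_mul hQ, subst_X hQ] at h
  linear_combination (-(u.subst Q : k⟦X⟧)) * h + Q * hinv

/-- if `R(z/(1+2az+z²)) = a + z` then
`z(R(z)−a)² + (2az−1)(R(z)−a) + z = 0`. -/
theorem stmt_4 (a : ℂ) (R : PowerSeries ℂ)
    (h : psSubst
        (PowerSeries.X *
          (1 + PowerSeries.C (2 * a) * PowerSeries.X + PowerSeries.X ^ 2)⁻¹) R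
        = PowerSeries.C a + PowerSeries.X) :
    PowerSeries.X * (R - PowerSeries.C a) ^ 2
      + (PowerSeries.C (2 * a) * PowerSeries.X - 1) * (R - PowerSeries.C a)
      + PowerSeries.X = 0 := by
  set u : ℂ⟦X⟧ := 1 + C (2 * a) * X + X ^ 2
  have hu : constantCoeff u = 1 := by simp [u]
  set v : ℂ⟦X⟧ := X * u⁻¹
  have hv0 : constantCoeff v = 0 := by simp [v]
  have hv1 : IsUnit (coeff 1 v) := by simp [v, constantCoeff_inv, hu]
  set Q := v.substInvOfIsUnit hv1
  have hQ : HasSubst Q := HasSubst.substInvOfIsUnit v hv1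
  have hRQ : R - C a = Q := by
    have hsubst := congrArg (subst Q) ((psSubst_eq_subst hv0 R).symm.trans h)
    rw [subst_substInvOfIsUnit_subst hv0 hv1, subst_add hQ, subst_C, subst_X hQ] at hsubst
    rw [hsubst]
    exact add_sub_cancel_left (C a) Q
  have hQu : X * u.subst Q = Q := X_mul_subst_eq_of_subst_X_mul_inv_eq_X (by simp [hu]) hQ
    (subst_substInvOfIsUnit_right v hv0 hv1)
  have hu_subst : u.subst Q = 1 + C (2 * a) * Q + Q ^ 2 := by
    rw [← coe_substAlgHom hQ]
    simp only [u, map_add, map_mul, map_pow, map_one, coe_substAlgHom, subst_X hQ, subst_C]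
    rfl
  rw [hu_subst] at hQu
  rw [hRQ]
  linear_combination hQu
end

section
/- Fix a β-sequence [·]_β. Let (P_n)_{n≥0} be an admissible polynomial sequence with lowering operator A and β-generating function H(x,z) = Σ_{n≥0} (1/[n]_β!) P_n(x) z^n. Suppose there exists u ∈ 𝒫₀,₁, u(z) = Σ_{k≥1} u_k z^k, such that H(x,z) = exp_β(u(z)x), i.e. Σ_{n≥0} (1/[n]_β!) P_n(x) z^n = Σ_{k≥0} (1/[k]_β!) x^k u(z)^k in ℂ[x][[z]]. Then for every polynomial p ∈ ℂ[x], D_β p = Σ_{k≥1} u_k A^k p (a finite sum, since A strictly lowers degree); that is, u(A) = D_β as operators on ℂ[x]. -/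
/-!
Put `eₙ = xⁿ / [n]_β!` and `qₙ = Pₙ / [n]_β!`. Then `D_β` and `A` act as plain shifts
`eₙ ↦ eₙ₋₁` and `qₙ ↦ qₙ₋₁`, and the generating-function hypothesis reads
`qₙ = ∑ₖ [zⁿ] u(z)ᵏ · eₖ`. Hence `D_β qₙ = ∑ₖ [zⁿ] u(z)ᵏ⁺¹ · eₖ`, and
splitting `u(z)ᵏ⁺¹ = u(z) · u(z)ᵏ` turns this into `∑ₘ uₘ qₙ₋ₘ = ∑ₘ uₘ Aᵐ qₙ`.
As the monic `Pₙ` span `ℂ[x]`, the two operators agree everywhere.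
-/

/-- The β-factorial `[n]_β! = ∏_{i=1}^n [i]_β`. -/
noncomputable def betaFact (β : ℕ → ℝ) (n : ℕ) : ℝ := ∏ i ∈ Finset.range n, β (i + 1)

open Finset

theorem betaFact_succ (β : ℕ → ℝ) (n : ℕ) :
    betaFact β (n + 1) = betaFact β n * β (n + 1) :=
  prod_range_succ _ _

theorem betaFact_pos {β : ℕ → ℝ} (hβpos : ∀ n, 1 ≤ n → 0 < β n) (n : ℕ) :
    0 < betaFact β n :=
  prod_pos fun i _ => hβpos (i + 1) (Nat.le_add_left 1 i)

section DivBetaFact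

variable {M : Type*} [AddCommGroup M] [Module ℂ M] (β : ℕ → ℝ)

noncomputable def divBetaFact (f : ℕ → M) (n : ℕ) : M := ((betaFact β n : ℂ))⁻¹ • f n

variable {β} {L : Module.End ℂ M} {f : ℕ → M}

theorem apply_divBetaFact_succ (hL : ∀ n, L (f n) = (β n : ℂ) • f (n - 1)) {n : ℕ}
    (hβ : β (n + 1) ≠ 0) :
    L (divBetaFact β f (n + 1)) = divBetaFact β f n := by
  have hβ' : (β (n + 1) : ℂ) ≠ 0 := by exact_mod_cast hβ
  rw [divBetaFact, map_smul, hL, smul_smul, betaFact_succ, Complex.ofReal_mul, mul_inv,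
    mul_assoc, inv_mul_cancel₀ hβ', mul_one]
  rfl

theorem apply_divBetaFact_zero (hL : ∀ n, L (f n) = (β n : ℂ) • f (n - 1))
    (hβ0 : β 0 = 0) : L (divBetaFact β f 0) = 0 := by
  simp [divBetaFact, hL, hβ0]

end DivBetaFact

section Lowering

variable {R M : Type*} [CommRing R] [AddCommGroup M] [Module R M]
  {L : Module.End R M} {g : ℕ → M}

theorem pow_apply_add_of_lowers (hsucc : ∀ n, L (g (n + 1)) = g n) (n m : ℕ) :
    (L ^ m) (g (n + m)) = g n := by
  induction m with
  | zero => rfl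
  | succ m ih => rw [pow_succ, Module.End.mul_apply, ← add_assoc, hsucc, ih]

theorem pow_apply_eq_zero_of_lowers (hsucc : ∀ n, L (g (n + 1)) = g n) (hzero : L (g 0) = 0)
    {n m : ℕ} (h : n < m) : (L ^ m) (g n) = 0 := by
  obtain ⟨k, rfl⟩ : ∃ k, m = k + (n + 1) := ⟨m - (n + 1), by omega⟩
  have h0 := pow_apply_add_of_lowers hsucc 0 n
  rw [zero_add] at h0
  rw [pow_add, Module.End.mul_apply, pow_succ', Module.End.mul_apply, h0, hzero, map_zero]

end Lowering

namespace PowerSeries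

variable {R : Type*} [CommRing R] {u : PowerSeries R}

theorem coeff_pow_eq_zero_of_lt (hu : constantCoeff u = 0) {n k : ℕ} (h : n < k) :
    coeff n (u ^ k) = 0 :=
  X_pow_dvd_iff.mp (pow_dvd_pow_of_dvd (X_dvd_iff.mpr hu) k) n h

theorem coeff_pow_succ_eq_sum (hu : constantCoeff u = 0) (n j : ℕ) :
    coeff n (u ^ (j + 1)) = ∑ m ∈ range n, coeff (m + 1) u * coeff (n - (m + 1)) (u ^ j) := by
  rw [pow_succ', coeff_mul, Nat.sum_antidiagonal_eq_sum_range_succ_mk, sum_range_succ']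
  simp [hu]

end PowerSeries

section Umbral

open PowerSeries

variable {R M : Type*} [CommRing R] [AddCommGroup M] [Module R M] {u : PowerSeries R}

theorem sum_range_coeff_pow_smul_of_lt (hu : constantCoeff u = 0) (e : ℕ → M) {m N : ℕ}
    (h : m < N) :
    ∑ j ∈ range N, coeff m (u ^ j) • e j =
      ∑ j ∈ range (m + 1), coeff m (u ^ j) • e j := by
  refine (sum_subset (range_subset_range.2 h) fun j _ hj => ?_).symm
  rw [coeff_pow_eq_zero_of_lt hu (by simpa using hj), zero_smul]

theorem apply_eq_sum_coeff_smul_pow_apply {D A : Module.End R M} {e q : ℕ → M}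
    (hu : constantCoeff u = 0)
    (hDsucc : ∀ n, D (e (n + 1)) = e n) (hD0 : D (e 0) = 0)
    (hAsucc : ∀ n, A (q (n + 1)) = q n) (hA0 : A (q 0) = 0)
    (hq : ∀ n, q n = ∑ k ∈ range (n + 1), coeff n (u ^ k) • e k)
    {n N : ℕ} (hnN : n ≤ N) :
    D (q n) = ∑ k ∈ range N, coeff (k + 1) u • (A ^ (k + 1)) (q n) := by
  have hDq : D (q n) = ∑ j ∈ range (n + 1), coeff n (u ^ (j + 1)) • e j := by
    rw [hq, ← sum_range_coeff_pow_smul_of_lt hu e (by omega : n < n + 2), map_sum,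
      sum_range_succ']
    simp only [map_smul, hDsucc, hD0, smul_zero, add_zero]
  have hAq : ∀ k < n, (A ^ (k + 1)) (q n) = q (n - (k + 1)) := fun k hk => by
    conv_lhs => rw [show n = n - (k + 1) + (k + 1) by omega]
    exact pow_apply_add_of_lowers hAsucc _ _
  calc D (q n)
      = ∑ j ∈ range (n + 1), ∑ k ∈ range n,
          (coeff (k + 1) u * coeff (n - (k + 1)) (u ^ j)) • e j := by
        simp_rw [hDq, coeff_pow_succ_eq_sum hu, sum_smul]
    _ = ∑ k ∈ range n, coeff (k + 1) u • q (n - (k + 1)) := by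
        rw [sum_comm]
        refine sum_congr rfl fun k _ => ?_
        rw [hq, ← sum_range_coeff_pow_smul_of_lt hu e (by omega : n - (k + 1) < n + 1), smul_sum]
        simp_rw [mul_smul]
    _ = ∑ k ∈ range n, coeff (k + 1) u • (A ^ (k + 1)) (q n) :=
        sum_congr rfl fun k hk => by rw [hAq k (mem_range.1 hk)]
    _ = ∑ k ∈ range N, coeff (k + 1) u • (A ^ (k + 1)) (q n) := by
        refine sum_subset (range_subset_range.2 hnN) fun k _ hk => ?_
        rw [pow_apply_eq_zero_of_lowers hAsucc hA0 (by simpa using hk), smul_zero]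

end Umbral

theorem Polynomial.mem_span_image_Iic_of_natDegree_le {R : Type*} [CommRing R] [Nontrivial R]
    {P : ℕ → Polynomial R} (hmonic : ∀ n, (P n).Monic) (hdeg : ∀ n, (P n).natDegree = n)
    {p : Polynomial R} {d : ℕ} (hp : p.natDegree ≤ d) :
    p ∈ Submodule.span R (P '' Set.Iic d) := by
  let S : Polynomial.Sequence R :=
    ⟨P, fun n => by rw [Polynomial.degree_eq_natDegree (hmonic n).ne_zero, hdeg]⟩
  have hspan := S.span_degreeLE (m := d) fun i _ => by simp [S, (hmonic i).leadingCoeff]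
  exact hspan ▸ Polynomial.mem_degreeLE.2 (Polynomial.degree_le_of_natDegree_le hp)

theorem stmt_10_general (β : ℕ → ℝ) (hβ0 : β 0 = 0) (hβpos : ∀ n, 1 ≤ n → 0 < β n)
    (P : ℕ → Polynomial ℂ)
    (hmonic : ∀ n, (P n).Monic) (hdeg : ∀ n, (P n).natDegree = n)
    (D A : Module.End ℂ (Polynomial ℂ))
    (hD : ∀ n : ℕ, D (Polynomial.X ^ n) = ((β n : ℂ)) • Polynomial.X ^ (n - 1))
    (hA : ∀ n : ℕ, A (P n) = ((β n : ℂ)) • P (n - 1))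
    (u : PowerSeries ℂ)
    (hu0 : PowerSeries.constantCoeff u = 0)
    (hgen : ∀ n : ℕ, ((betaFact β n : ℂ))⁻¹ • P n =
      ∑ k ∈ Finset.range (n + 1),
        ((betaFact β k : ℂ))⁻¹ •
          (Polynomial.C (PowerSeries.coeff n (u ^ k)) * Polynomial.X ^ k)) :
    ∀ p : Polynomial ℂ, D p = ∑ k ∈ Finset.range (p.natDegree + 1),
      (PowerSeries.coeff (k + 1) u) • ((A ^ (k + 1)) p) := by
  intro p
  set d := p.natDegree
  set T : Module.End ℂ (Polynomial ℂ) :=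
    ∑ k ∈ range (d + 1), PowerSeries.coeff (k + 1) u • A ^ (k + 1)
  have hT : ∀ q, T q = ∑ k ∈ range (d + 1), PowerSeries.coeff (k + 1) u • (A ^ (k + 1)) q :=
    fun q => by simp only [T, LinearMap.sum_apply, LinearMap.smul_apply]
  have hβ : ∀ n, β (n + 1) ≠ 0 := fun n => (hβpos (n + 1) (by omega)).ne'
  have hexp : ∀ n, divBetaFact β P n = ∑ k ∈ range (n + 1),
      PowerSeries.coeff n (u ^ k) • divBetaFact β (Polynomial.X ^ ·) k := by
    intro n
    rw [divBetaFact, hgen]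
    refine sum_congr rfl fun k _ => ?_
    rw [divBetaFact, ← Polynomial.smul_eq_C_mul, smul_comm]
  have hDT : Set.EqOn D T (P '' Set.Iic d) := by
    rintro _ ⟨n, hn, rfl⟩
    have hP : P n = (betaFact β n : ℂ) • divBetaFact β P n := by
      rw [divBetaFact, smul_smul, mul_inv_cancel₀ (by exact_mod_cast (betaFact_pos hβpos n).ne'),
        one_smul]
    rw [hP, map_smul, map_smul, hT, apply_eq_sum_coeff_smul_pow_apply hu0
      (fun n => apply_divBetaFact_succ hD (hβ n)) (apply_divBetaFact_zero hD hβ0)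
      (fun n => apply_divBetaFact_succ hA (hβ n)) (apply_divBetaFact_zero hA hβ0) hexp
      (Nat.le_succ_of_le hn)]
  rw [← hT]
  exact LinearMap.eqOn_span' hDT (Polynomial.mem_span_image_Iic_of_natDegree_le hmonic hdeg le_rfl)

/-- if the β-generating function of an admissible polynomial sequence has the
form `exp_β(u(z)x)` with `u ∈ 𝒫₀,₁`, then `u(A) = D_β` as operators on `ℂ[x]`, where `A` is
the lowering operator of the sequence. -/
theorem stmt_10 (β : ℕ → ℝ) (hβ0 : β 0 = 0) (hβ1 : β 1 = 1) (hβpos : ∀ n, 1 ≤ n → 0 < β n)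
    (P : ℕ → Polynomial ℂ)
    (hmonic : ∀ n, (P n).Monic) (hdeg : ∀ n, (P n).natDegree = n)
    (hzero : ∀ n, 1 ≤ n → (P n).coeff 0 = 0)
    (D A : Module.End ℂ (Polynomial ℂ))
    (hD : ∀ n : ℕ, D (Polynomial.X ^ n) = ((β n : ℂ)) • Polynomial.X ^ (n - 1))
    (hA : ∀ n : ℕ, A (P n) = ((β n : ℂ)) • P (n - 1))
    (u : PowerSeries ℂ)
    (hu0 : PowerSeries.constantCoeff u = 0) (hu1 : PowerSeries.coeff 1 u = 1)
    (hgen : ∀ n : ℕ, ((betaFact β n : ℂ))⁻¹ • P n =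
      ∑ k ∈ Finset.range (n + 1),
        ((betaFact β k : ℂ))⁻¹ •
          (Polynomial.C (PowerSeries.coeff n (u ^ k)) * Polynomial.X ^ k)) :
    ∀ p : Polynomial ℂ, D p = ∑ k ∈ Finset.range (p.natDegree + 1),
      (PowerSeries.coeff (k + 1) u) • ((A ^ (k + 1)) p) :=
  stmt_10_general β hβ0 hβpos P hmonic hdeg D A hD hA u hu0 hgen
end

section
/- Fix a β-sequence [·]_β. Let (P_n)_{n≥0} be an admissible polynomial sequence with lowering operator A and β-generating function H(x,z) = Σ_{n≥0} (1/[n]_β!) P_n(x) z^n. If A commutes with D_β on ℂ[x] (A ∘ D_β = D_β ∘ A), then there exists u ∈ 𝒫₀,₁ such that Σ_{n≥0} (1/[n]_β!) (D_β P_n)(x) z^n = u(z) · H(x,z) in ℂ[x][[z]]. -/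
open Polynomial Finset

namespace Polynomial

variable {K : Type*} [Field K]

theorem natDegree_sub_coeff_smul_monic_le {p Q : K[X]} {n : ℕ} (hp : p.Monic)
    (hpn : p.natDegree = n + 1) (hQ : Q.natDegree ≤ n + 1) :
    (Q - Q.coeff (n + 1) • p).natDegree ≤ n := by
  rw [natDegree_le_iff_coeff_eq_zero]
  intro m hm
  rw [coeff_sub, coeff_smul]
  rcases (show n + 1 ≤ m from hm).eq_or_lt with rfl | hlt
  · rw [← hpn, hp.coeff_natDegree, smul_eq_mul, mul_one, sub_self]
  · rw [coeff_eq_zero_of_natDegree_lt (hQ.trans_lt hlt),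
      coeff_eq_zero_of_natDegree_lt (hpn.trans_lt hlt), smul_eq_mul, mul_zero, sub_self]

end Polynomial

section LoweringOperator

variable {K : Type*} [Field K] {b : ℕ → K} {P : ℕ → K[X]} {A : Module.End K K[X]}

theorem lowering_apply_eq (hA : ∀ n, A (P (n + 1)) = b (n + 1) • P n) (Q : K[X]) (n : ℕ) :
    A Q = A (Q - Q.coeff (n + 1) • P (n + 1)) + (Q.coeff (n + 1) * b (n + 1)) • P n := by
  rw [map_sub, map_smul, hA, smul_smul]
  abel

theorem degree_lowering_lt (hmonic : ∀ n, (P n).Monic) (hdeg : ∀ n, (P n).natDegree = n)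
    (hA0 : A (P 0) = 0) (hA : ∀ n, A (P (n + 1)) = b (n + 1) • P n) :
    ∀ (d : ℕ) (Q : K[X]), Q.natDegree ≤ d → (A Q).degree < d
  | 0, Q, hQ => by
    rw [eq_C_of_natDegree_le_zero hQ, ← mul_one (C _), ← smul_eq_C_mul,
      ← (hmonic 0).natDegree_eq_zero.mp (hdeg 0), map_smul, hA0, smul_zero, degree_zero]
    exact WithBot.bot_lt_coe 0
  | d + 1, Q, hQ => by
    have hrest := degree_lowering_lt hmonic hdeg hA0 hA d _
      (natDegree_sub_coeff_smul_monic_le (hmonic _) (hdeg _) hQ)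
    have hd : (d : WithBot ℕ) < ↑(d + 1) := by exact_mod_cast d.lt_succ_self
    have hlast : (P d).degree < ↑(d + 1) :=
      (degree_le_natDegree.trans_eq (congrArg _ (hdeg d))).trans_lt hd
    rw [lowering_apply_eq hA Q d]
    exact (degree_add_le _ _).trans_lt
      (max_lt (hrest.trans hd) ((degree_smul_le _ _).trans_lt hlast))

theorem coeff_lowering (hmonic : ∀ n, (P n).Monic) (hdeg : ∀ n, (P n).natDegree = n)
    (hA0 : A (P 0) = 0) (hA : ∀ n, A (P (n + 1)) = b (n + 1) • P n) {Q : K[X]} {d : ℕ}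
    (hQ : Q.natDegree ≤ d + 1) : (A Q).coeff d = b (d + 1) * Q.coeff (d + 1) := by
  have hrest := degree_lowering_lt hmonic hdeg hA0 hA d _
    (natDegree_sub_coeff_smul_monic_le (hmonic _) (hdeg _) hQ)
  have hPd : (P d).coeff d = 1 := by simpa only [hdeg] using (hmonic d).coeff_natDegree
  rw [lowering_apply_eq hA Q d, coeff_add, coeff_eq_zero_of_degree_lt hrest, coeff_smul, hPd,
    smul_eq_mul, mul_one, zero_add, mul_comm]

theorem eq_zero_of_lowering_eq_zero (hmonic : ∀ n, (P n).Monic)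
    (hdeg : ∀ n, (P n).natDegree = n) (hA0 : A (P 0) = 0)
    (hA : ∀ n, A (P (n + 1)) = b (n + 1) • P n) (hb : ∀ n, b (n + 1) ≠ 0) {Q : K[X]}
    (hAQ : A Q = 0) (hQ0 : Q.coeff 0 = 0) : Q = 0 := by
  rcases he : Q.natDegree with _ | e
  · rw [eq_C_of_natDegree_le_zero he.le, hQ0, map_zero]
  · have hcoeff := coeff_lowering hmonic hdeg hA0 hA (Q := Q) he.le
    rw [hAQ, coeff_zero, eq_comm, mul_eq_zero] at hcoeff
    refine leadingCoeff_eq_zero.mp ?_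
    rw [leadingCoeff, he]
    exact hcoeff.resolve_left (hb e)

theorem eq_of_lowering_eq (hmonic : ∀ n, (P n).Monic)
    (hdeg : ∀ n, (P n).natDegree = n) (hA0 : A (P 0) = 0)
    (hA : ∀ n, A (P (n + 1)) = b (n + 1) • P n) (hb : ∀ n, b (n + 1) ≠ 0) {Q R : K[X]}
    (hAQR : A Q = A R) (hQR : Q.coeff 0 = R.coeff 0) : Q = R :=
  sub_eq_zero.mp <| eq_zero_of_lowering_eq_zero hmonic hdeg hA0 hA hb
    (by rw [map_sub, hAQR, sub_self]) (by rw [coeff_sub, hQR, sub_self])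

variable {w : ℕ → K}

theorem lowering_sum_range_succ (hA0 : A (P 0) = 0) (hA : ∀ n, A (P (n + 1)) = b (n + 1) • P n)
    (hw : ∀ n, w (n + 1) * b (n + 1) = w n) (c : ℕ → K) (n : ℕ) :
    A (∑ k ∈ range (n + 1 + 1), c k • w (n + 1 - k) • P (n + 1 - k)) =
      ∑ k ∈ range (n + 1), c k • w (n - k) • P (n - k) := by
  rw [map_sum, sum_range_succ, Nat.sub_self, map_smul, map_smul, hA0, smul_zero, smul_zero,
    add_zero]
  refine sum_congr rfl fun k hk => ?_
  rw [Nat.sub_add_comm (mem_range_succ_iff.mp hk), map_smul, map_smul, hA, smul_smul (w _), hw]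

theorem coeff_zero_sum_range (hP0 : (P 0).coeff 0 = 1) (hzero : ∀ n, (P (n + 1)).coeff 0 = 0)
    (hw0 : w 0 = 1) (c : ℕ → K) (n : ℕ) :
    (∑ k ∈ range (n + 1), c k • w (n - k) • P (n - k)).coeff 0 = c n := by
  rw [finsetSum_coeff, sum_range_succ, Nat.sub_self, coeff_smul, coeff_smul, hP0, hw0,
    sum_eq_zero, zero_add, smul_eq_mul, smul_eq_mul, one_mul, mul_one]
  intro k hk
  obtain ⟨j, hj⟩ := Nat.exists_eq_add_one_of_ne_zero (Nat.sub_ne_zero_of_lt (mem_range.mp hk))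
  rw [coeff_smul, coeff_smul, hj, hzero, smul_zero, smul_zero]

theorem smul_apply_eq_sum_of_commute (hmonic : ∀ n, (P n).Monic)
    (hdeg : ∀ n, (P n).natDegree = n) (hzero : ∀ n, (P (n + 1)).coeff 0 = 0)
    (hA0 : A (P 0) = 0) (hA : ∀ n, A (P (n + 1)) = b (n + 1) • P n) (hb : ∀ n, b (n + 1) ≠ 0)
    {D : Module.End K K[X]} (hcomm : A * D = D * A) (hw0 : w 0 = 1)
    (hw : ∀ n, w (n + 1) * b (n + 1) = w n) (n : ℕ) :
    w n • D (P n) = ∑ k ∈ range (n + 1), (w k * (D (P k)).coeff 0) • w (n - k) • P (n - k) := by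
  have hP0 : (P 0).coeff 0 = 1 := by simpa only [hdeg] using (hmonic 0).coeff_natDegree
  have hAD : ∀ m, A (D (P m)) = D (A (P m)) := fun m => LinearMap.congr_fun hcomm (P m)
  have hcoeff : ∀ m, (w m • D (P m)).coeff 0 =
      (∑ k ∈ range (m + 1), (w k * (D (P k)).coeff 0) • w (m - k) • P (m - k)).coeff 0 :=
    fun m => by rw [coeff_smul, smul_eq_mul, coeff_zero_sum_range hP0 hzero hw0]
  induction n with
  | zero =>
    refine eq_of_lowering_eq hmonic hdeg hA0 hA hb ?_ (hcoeff 0)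
    simp [hAD, hA0]
  | succ n ih =>
    refine eq_of_lowering_eq hmonic hdeg hA0 hA hb ?_ (hcoeff (n + 1))
    rw [lowering_sum_range_succ hA0 hA hw, map_smul, hAD, hA, map_smul, smul_smul, hw, ih]

theorem mk_smul_apply_eq_map_mul_mk (hmonic : ∀ n, (P n).Monic)
    (hdeg : ∀ n, (P n).natDegree = n) (hzero : ∀ n, (P (n + 1)).coeff 0 = 0)
    (hA0 : A (P 0) = 0) (hA : ∀ n, A (P (n + 1)) = b (n + 1) • P n) (hb : ∀ n, b (n + 1) ≠ 0)
    {D : Module.End K K[X]} (hcomm : A * D = D * A) (hw0 : w 0 = 1)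
    (hw : ∀ n, w (n + 1) * b (n + 1) = w n) :
    PowerSeries.mk (fun n => w n • D (P n)) =
      PowerSeries.map C (PowerSeries.mk fun k => w k * (D (P k)).coeff 0) *
        PowerSeries.mk (fun n => w n • P n) := by
  ext1 n
  rw [PowerSeries.coeff_mk, PowerSeries.coeff_mul, Nat.sum_antidiagonal_eq_sum_range_succ_mk,
    smul_apply_eq_sum_of_commute hmonic hdeg hzero hA0 hA hb hcomm hw0 hw]
  refine sum_congr rfl fun k _ => ?_
  rw [PowerSeries.coeff_map, PowerSeries.coeff_mk, PowerSeries.coeff_mk, ← smul_eq_C_mul]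

end LoweringOperator

/-- if the lowering operator `A` of an admissible polynomial sequence commutes
with `D_β`, then there is `u ∈ 𝒫₀,₁` with
`Σ (1/[n]_β!) (D_β P_n)(x) zⁿ = u(z) · H(x,z)`. -/
theorem stmt_11 (β : ℕ → ℝ) (hβ0 : β 0 = 0) (hβ1 : β 1 = 1) (hβpos : ∀ n, 1 ≤ n → 0 < β n)
    (P : ℕ → Polynomial ℂ)
    (hmonic : ∀ n, (P n).Monic) (hdeg : ∀ n, (P n).natDegree = n)
    (hzero : ∀ n, 1 ≤ n → (P n).coeff 0 = 0)
    (D A : Module.End ℂ (Polynomial ℂ))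
    (hD : ∀ n : ℕ, D (Polynomial.X ^ n) = ((β n : ℂ)) • Polynomial.X ^ (n - 1))
    (hA : ∀ n : ℕ, A (P n) = ((β n : ℂ)) • P (n - 1))
    (hcomm : A * D = D * A) :
    ∃ u : PowerSeries ℂ,
      PowerSeries.constantCoeff u = 0 ∧ PowerSeries.coeff 1 u = 1 ∧
      PowerSeries.mk (fun n => ((betaFact β n : ℂ))⁻¹ • D (P n)) =
        PowerSeries.map (Polynomial.C : ℂ →+* Polynomial ℂ) u *
          PowerSeries.mk (fun n => ((betaFact β n : ℂ))⁻¹ • P n) := by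
  have hβ : ∀ n, ((β (n + 1) : ℝ) : ℂ) ≠ 0 := fun n => by
    exact_mod_cast (hβpos (n + 1) n.succ_pos).ne'
  have hA0 : A (P 0) = 0 := by simpa [hβ0] using hA 0
  have hP0 : P 0 = 1 := (hmonic 0).natDegree_eq_zero.mp (hdeg 0)
  have hP1 : P 1 = X := by simpa [hzero 1 le_rfl] using (hmonic 1).eq_X_add_C (hdeg 1)
  have hw (n : ℕ) : ((betaFact β (n + 1) : ℂ))⁻¹ * β (n + 1) = (betaFact β n : ℂ)⁻¹ := by
    rw [betaFact, prod_range_succ, ← betaFact]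
    push_cast
    rw [mul_inv, mul_assoc, inv_mul_cancel₀ (hβ n), mul_one]
  have hAsucc (n : ℕ) : A (P (n + 1)) = (β (n + 1) : ℂ) • P n := by rw [hA, Nat.add_sub_cancel]
  refine ⟨_, ?_, ?_, mk_smul_apply_eq_map_mul_mk (b := (β · : ℕ → ℂ)) hmonic hdeg
    (fun n => hzero (n + 1) n.succ_pos) hA0 hAsucc hβ hcomm (by simp [betaFact]) hw⟩
  · have hD1 : D 1 = 0 := by simpa [hβ0] using hD 0
    simp [hP0, hD1]
  · have hDX : D X = 1 := by simpa [hβ1] using hD 1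
    simp [hP1, hDX, betaFact, hβ1]
end

section
/- Fix a β-sequence [·]_β and let Δ_β : ℂ[x] → ℂ[x,y] be the ℂ-linear map with Δ_β(x^n) = Σ_{k=0}^n ([n]_β!/([k]_β!·[n−k]_β!)) x^k y^{n−k}. Let (P_n)_{n≥0} be an admissible polynomial sequence with β-generating function H(x,z) = Σ_{n≥0} (1/[n]_β!) P_n(x) z^n. Then the following are equivalent: (i) for every n ≥ 0, Δ_β(P_n) = Σ_{k=0}^n ([n]_β!/([k]_β!·[n−k]_β!)) P_k(x) P_{n−k}(y) in ℂ[x,y]; (ii) there exists u ∈ 𝒫₀,₁ such that H(x,z) = exp_β(u(z)x), i.e. Σ_{n≥0} (1/[n]_β!) P_n(x) z^n = Σ_{k≥0} (1/[k]_β!) x^k u(z)^k in ℂ[x][[z]]. -/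
open Finset

namespace BetaBinomial

section Bivariate

variable {R : Type*} [CommSemiring R]

noncomputable def degXY (i l : ℕ) : Fin 2 →₀ ℕ := Finsupp.single 0 i + Finsupp.single 1 l

theorem degXY_inj {i l i' l' : ℕ} : degXY i l = degXY i' l' ↔ i = i' ∧ l = l' := by
  refine ⟨fun h => ⟨?_, ?_⟩, fun h => by rw [h.1, h.2]⟩
  · simpa [degXY] using DFunLike.congr_fun h 0
  · simpa [degXY] using DFunLike.congr_fun h 1

theorem ext_degXY {p q : MvPolynomial (Fin 2) R}
    (h : ∀ i l, p.coeff (degXY i l) = q.coeff (degXY i l)) : p = q := by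
  refine MvPolynomial.ext _ _ fun d => ?_
  have hd : d = degXY (d 0) (d 1) := by
    ext j
    fin_cases j <;> simp [degXY]
  rw [hd]
  exact h _ _

theorem coeff_degXY_X_pow_mul_X_pow (i l a b : ℕ) :
    (MvPolynomial.X 0 ^ a * MvPolynomial.X 1 ^ b : MvPolynomial (Fin 2) R).coeff (degXY i l) =
      if a = i ∧ b = l then 1 else 0 := by
  rw [MvPolynomial.X_pow_eq_monomial, MvPolynomial.X_pow_eq_monomial,
    MvPolynomial.monomial_mul, MvPolynomial.coeff_monomial, one_mul]
  exact if_congr degXY_inj rfl rfl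

theorem coeff_degXY_aeval_mul_aeval (p q : Polynomial R) (i l : ℕ) :
    (Polynomial.aeval (MvPolynomial.X 0 : MvPolynomial (Fin 2) R) p *
      Polynomial.aeval (MvPolynomial.X 1) q).coeff (degXY i l) = p.coeff i * q.coeff l := by
  induction p using Polynomial.induction_on' with
  | add p₁ p₂ h₁ h₂ =>
    simp only [map_add, add_mul, MvPolynomial.coeff_add, Polynomial.coeff_add, h₁, h₂]
  | monomial a r =>
    induction q using Polynomial.induction_on' with
    | add q₁ q₂ h₁ h₂ =>
      simp only [map_add, mul_add, MvPolynomial.coeff_add, Polynomial.coeff_add, h₁, h₂]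
    | monomial b s =>
      rw [Polynomial.aeval_monomial, Polynomial.aeval_monomial, mul_mul_mul_comm,
        ← map_mul, MvPolynomial.algebraMap_eq, MvPolynomial.coeff_C_mul,
        coeff_degXY_X_pow_mul_X_pow, Polynomial.coeff_monomial, Polynomial.coeff_monomial]
      split_ifs <;> simp_all

theorem coeff_degXY_map_of_map_X_pow (b : ℕ → ℕ → R)
    (Δ : Polynomial R →ₗ[R] MvPolynomial (Fin 2) R)
    (hΔ : ∀ n, Δ (Polynomial.X ^ n) = ∑ k ∈ range (n + 1),
      b n k • (MvPolynomial.X 0 ^ k * MvPolynomial.X 1 ^ (n - k)))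
    (p : Polynomial R) (i l : ℕ) :
    (Δ p).coeff (degXY i l) = b (i + l) i * p.coeff (i + l) := by
  induction p using Polynomial.induction_on' with
  | add p₁ p₂ h₁ h₂ =>
    simp only [map_add, MvPolynomial.coeff_add, Polynomial.coeff_add, h₁, h₂, mul_add]
  | monomial n a =>
    rw [← Polynomial.smul_X_eq_monomial, map_smul, hΔ, MvPolynomial.coeff_smul,
      MvPolynomial.coeff_sum, Polynomial.coeff_smul, Polynomial.coeff_X_pow]
    simp only [MvPolynomial.coeff_smul, coeff_degXY_X_pow_mul_X_pow, smul_eq_mul, mul_ite,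
      mul_one, mul_zero]
    by_cases hn : n = i + l
    · subst hn
      rw [sum_eq_single_of_mem i (by simp) (fun k _ hk => if_neg fun h => hk h.1)]
      simp [mul_comm]
    · rw [sum_eq_zero fun k hk => if_neg fun h => hn (by simp at hk; omega),
        if_neg (Ne.symm hn)]
      simp

end Bivariate

section Columns

variable {K : Type*} [Field K]

noncomputable def column (c : ℕ → K) (P : ℕ → Polynomial K) (k : ℕ) : PowerSeries K :=
  PowerSeries.mk fun n => c k / c n * (P n).coeff k

theorem coeff_pow_eq_zero_of_lt {u : PowerSeries K} (hu : PowerSeries.constantCoeff u = 0)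
    {n k : ℕ} (h : n < k) : PowerSeries.coeff n (u ^ k) = 0 :=
  PowerSeries.X_pow_dvd_iff.1 (pow_dvd_pow_of_dvd (PowerSeries.X_dvd_iff.2 hu) k) n h

variable {c : ℕ → K} (hc : ∀ n, c n ≠ 0) {P : ℕ → Polynomial K}
include hc

theorem binomial_coeff_iff_coeff_column (n i l : ℕ) :
    c (i + l) / (c i * c (i + l - i)) * (P n).coeff (i + l) =
        ∑ k ∈ range (n + 1), c n / (c k * c (n - k)) * ((P k).coeff i * (P (n - k)).coeff l) ↔
      PowerSeries.coeff n (column c P (i + l)) =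
        PowerSeries.coeff n (column c P i * column c P l) := by
  have hscale : c i * c l / c n ≠ 0 := div_ne_zero (mul_ne_zero (hc i) (hc l)) (hc n)
  rw [← mul_right_inj' hscale, mul_sum, PowerSeries.coeff_mul,
    Finset.Nat.sum_antidiagonal_eq_sum_range_succ (fun a b => PowerSeries.coeff a (column c P i) *
      PowerSeries.coeff b (column c P l))]
  simp only [column, PowerSeries.coeff_mk, Nat.add_sub_cancel_left]
  refine Iff.of_eq (congrArg₂ _ ?_ (sum_congr rfl fun k _ => ?_))
  · field_simp [hc]
  · field_simp [hc]

theorem binomial_identity_iff_column_add (Δ : Polynomial K →ₗ[K] MvPolynomial (Fin 2) K)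
    (hΔ : ∀ n, Δ (Polynomial.X ^ n) = ∑ k ∈ range (n + 1),
      (c n / (c k * c (n - k))) • (MvPolynomial.X 0 ^ k * MvPolynomial.X 1 ^ (n - k))) :
    (∀ n, Δ (P n) = ∑ k ∈ range (n + 1), (c n / (c k * c (n - k))) •
        (Polynomial.aeval (MvPolynomial.X 0 : MvPolynomial (Fin 2) K) (P k) *
          Polynomial.aeval (MvPolynomial.X 1) (P (n - k)))) ↔
      ∀ i l, column c P (i + l) = column c P i * column c P l := by
  refine (forall_congr' fun n => ⟨fun h i l => congrArg (MvPolynomial.coeff (degXY i l)) h,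
    fun h => ext_degXY h⟩).trans ?_
  simp only [coeff_degXY_map_of_map_X_pow _ Δ hΔ, MvPolynomial.coeff_sum, MvPolynomial.coeff_smul,
    coeff_degXY_aeval_mul_aeval, smul_eq_mul, binomial_coeff_iff_coeff_column hc,
    PowerSeries.ext_iff]
  exact ⟨fun h i l n => h n i l, fun h n i l => h i l n⟩

theorem genFun_iff_column_eq_pow {u : PowerSeries K} (hu : PowerSeries.constantCoeff u = 0) :
    (∀ n, (c n)⁻¹ • P n = ∑ k ∈ range (n + 1),
        (c k)⁻¹ • (Polynomial.C (PowerSeries.coeff n (u ^ k)) * Polynomial.X ^ k)) ↔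
      ∀ k, column c P k = u ^ k := by
  have hcoeff : ∀ n m, (∑ k ∈ range (n + 1),
      (c k)⁻¹ • (Polynomial.C (PowerSeries.coeff n (u ^ k)) * Polynomial.X ^ k)).coeff m =
        (c m)⁻¹ * PowerSeries.coeff n (u ^ m) := by
    intro n m
    simp only [Polynomial.finsetSum_coeff, Polynomial.coeff_smul, Polynomial.coeff_C_mul_X_pow,
      smul_eq_mul, mul_ite, mul_zero, sum_ite_eq, mem_range]
    split_ifs with hm
    · rfl
    · rw [coeff_pow_eq_zero_of_lt hu (by omega), mul_zero]
  simp only [Polynomial.ext_iff, Polynomial.coeff_smul, smul_eq_mul, hcoeff, PowerSeries.ext_iff,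
    column, PowerSeries.coeff_mk]
  rw [forall_comm]
  refine forall_congr' fun m => forall_congr' fun n => ?_
  field_simp [hc]

end Columns

end BetaBinomial

open BetaBinomial in
theorem stmt_12_general (β : ℕ → ℝ) (hβpos : ∀ n, 1 ≤ n → 0 < β n)
    (P : ℕ → Polynomial ℂ)
    (hmonic : ∀ n, (P n).Monic) (hdeg : ∀ n, (P n).natDegree = n)
    (hzero : ∀ n, 1 ≤ n → (P n).coeff 0 = 0)
    (Δ : Polynomial ℂ →ₗ[ℂ] MvPolynomial (Fin 2) ℂ)
    (hΔ : ∀ n : ℕ, Δ (Polynomial.X ^ n) =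
      ∑ k ∈ Finset.range (n + 1),
        ((betaFact β n / (betaFact β k * betaFact β (n - k)) : ℝ) : ℂ) •
          (MvPolynomial.X (0 : Fin 2) ^ k * MvPolynomial.X (1 : Fin 2) ^ (n - k))) :
    (∀ n : ℕ, Δ (P n) =
      ∑ k ∈ Finset.range (n + 1),
        ((betaFact β n / (betaFact β k * betaFact β (n - k)) : ℝ) : ℂ) •
          (Polynomial.aeval (MvPolynomial.X (0 : Fin 2) : MvPolynomial (Fin 2) ℂ) (P k) *
            Polynomial.aeval (MvPolynomial.X (1 : Fin 2) : MvPolynomial (Fin 2) ℂ) (P (n - k))))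
    ↔
    (∃ u : PowerSeries ℂ,
      PowerSeries.constantCoeff (R := ℂ) u = 0 ∧ PowerSeries.coeff (R := ℂ) 1 u = 1 ∧
      ∀ n : ℕ, ((betaFact β n : ℂ))⁻¹ • P n =
        ∑ k ∈ Finset.range (n + 1),
          ((betaFact β k : ℂ))⁻¹ •
            (Polynomial.C (PowerSeries.coeff (R := ℂ) n (u ^ k)) * Polynomial.X ^ k)) := by
  set c : ℕ → ℂ := fun n => (betaFact β n : ℂ)
  have hc : ∀ n, c n ≠ 0 := fun n =>
    Complex.ofReal_ne_zero.2 (Finset.prod_pos fun i _ => hβpos (i + 1) i.succ_pos).ne'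
  push_cast at hΔ ⊢
  refine (binomial_identity_iff_column_add hc Δ hΔ).trans ?_
  have hP0 : P 0 = 1 := Polynomial.eq_one_of_monic_natDegree_zero (hmonic 0) (hdeg 0)
  constructor
  · intro hadd
    have hcol0 : column c P 0 = 1 := by
      ext (_ | n)
      · simp [column, hP0, hc 0]
      · simp [column, hzero (n + 1) n.succ_pos]
    have hconst : PowerSeries.constantCoeff (column c P 1) = 0 := by
      simp [column, ← PowerSeries.coeff_zero_eq_constantCoeff_apply, hP0, Polynomial.coeff_one]
    have hcoeff1 : PowerSeries.coeff 1 (column c P 1) = 1 := by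
      have h11 : (P 1).coeff 1 = 1 := by simpa [hdeg 1] using (hmonic 1).coeff_natDegree
      simp [column, hc 1, h11]
    refine ⟨column c P 1, hconst, hcoeff1, (genFun_iff_column_eq_pow hc hconst).2 fun k => ?_⟩
    induction k with
    | zero => exact hcol0
    | succ k ih => rw [hadd, ih, pow_succ]
  · rintro ⟨u, hu0, -, hgen⟩ i l
    simp only [(genFun_iff_column_eq_pow hc hu0).1 hgen, pow_add]

/-- an admissible polynomial sequence satisfies the β-binomial identity
`Δ_β(P_n) = Σ_k ([n]!/([k]![n−k]!)) P_k(x) P_{n−k}(y)` for all `n` if and only if its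
β-generating function has the form `exp_β(u(z)x)` for some `u ∈ 𝒫₀,₁`. -/
theorem stmt_12 (β : ℕ → ℝ) (hβ0 : β 0 = 0) (hβ1 : β 1 = 1) (hβpos : ∀ n, 1 ≤ n → 0 < β n)
    (P : ℕ → Polynomial ℂ)
    (hmonic : ∀ n, (P n).Monic) (hdeg : ∀ n, (P n).natDegree = n)
    (hzero : ∀ n, 1 ≤ n → (P n).coeff 0 = 0)
    (Δ : Polynomial ℂ →ₗ[ℂ] MvPolynomial (Fin 2) ℂ)
    (hΔ : ∀ n : ℕ, Δ (Polynomial.X ^ n) =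
      ∑ k ∈ Finset.range (n + 1),
        ((betaFact β n / (betaFact β k * betaFact β (n - k)) : ℝ) : ℂ) •
          (MvPolynomial.X (0 : Fin 2) ^ k * MvPolynomial.X (1 : Fin 2) ^ (n - k))) :
    (∀ n : ℕ, Δ (P n) =
      ∑ k ∈ Finset.range (n + 1),
        ((betaFact β n / (betaFact β k * betaFact β (n - k)) : ℝ) : ℂ) •
          (Polynomial.aeval (MvPolynomial.X (0 : Fin 2) : MvPolynomial (Fin 2) ℂ) (P k) *
            Polynomial.aeval (MvPolynomial.X (1 : Fin 2) : MvPolynomial (Fin 2) ℂ) (P (n - k))))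
    ↔
    (∃ u : PowerSeries ℂ,
      PowerSeries.constantCoeff (R := ℂ) u = 0 ∧ PowerSeries.coeff (R := ℂ) 1 u = 1 ∧
      ∀ n : ℕ, ((betaFact β n : ℂ))⁻¹ • P n =
        ∑ k ∈ Finset.range (n + 1),
          ((betaFact β k : ℂ))⁻¹ •
            (Polynomial.C (PowerSeries.coeff (R := ℂ) n (u ^ k)) * Polynomial.X ^ k)) :=
  stmt_12_general β hβpos P hmonic hdeg hzero Δ hΔ
end

section
/- Let (P_n)_{n≥0} be polynomials in ℂ[x] with each P_n monic of degree n, P_0 = 1 and P_n(0) = 0 for n ≥ 1. Let ℂ⟨X,Y⟩ be the free (noncommutative) algebra on two generators X, Y, and for a polynomial p ∈ ℂ[x] and W ∈ ℂ⟨X,Y⟩ let p(W) denote the image of p under the algebra homomorphism sending x to W. Then the following are equivalent: (i) for every n ≥ 1, P_n(X + Y) = Σ_{k=1}^n Σ_{(i_1,…,i_k)} [ P_{i_1}(X) P_{i_2}(Y) P_{i_3}(X) P_{i_4}(Y) ⋯ + P_{i_1}(Y) P_{i_2}(X) P_{i_3}(Y) P_{i_4}(X) ⋯ ], where the inner sum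 is over all compositions (i_1,…,i_k) of n into k positive parts and in each product the arguments alternate between X and Y; (ii) there exists u ∈ 𝒫₀,₁ such that Σ_{n≥0} P_n(x) z^n = Σ_{k≥0} x^k u(z)^k in ℂ[x][[z]] (i.e. the generating function equals 1/(1 − u(z)x)). -/
/-- The alternating product `P_{i_1}(W) P_{i_2}(V) P_{i_3}(W) ⋯` over the blocks
`(i_1, …, i_k)` of a composition `c` of `n`, with arguments alternating between
`W` and `V`, in the free algebra `ℂ⟨X,Y⟩`. -/
noncomputable def altProd (P : ℕ → Polynomial ℂ) {n : ℕ} (c : Composition n)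
    (W V : FreeAlgebra ℂ Bool) : FreeAlgebra ℂ Bool :=
  (List.ofFn fun j : Fin c.length =>
    Polynomial.aeval (if (j : ℕ) % 2 = 0 then W else V) (P (c.blocksFun j))).prod

/-!
Write `F_W = ∑ₙ Pₙ(W) zⁿ` and `S_{W,V}` for the generating function of the alternating products
that start with `W`. Splitting off the first block of a composition gives
`S_{W,V} = 1 + (F_W - 1) S_{V,W}`; (i) says `F_{X+Y} = S_{X,Y} + S_{Y,X} - 1`, and (ii) says
`F_W = 1 + u(z) W F_W` in every algebra. From `F_W = 1 + a F_W` and `F_V = 1 + b F_V` a short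
noncommutative computation gives `G = 1 + (a + b) G` for `G = S_{W,V} + S_{V,W} - 1`; since this
equation has a unique solution when `a + b` has no constant term, (ii) implies (i).
Conversely, send `X`, `Y` to operators `E`, `O` on `ℂ[x]` with `E² = O² = 0` and `E + O`
multiplication by `x`. Then `F_E = 1 + u(z) E F_E` with `u = ∑ₙ Pₙ'(0) zⁿ`, so (i) and the same
computation give `F_x = 1 + u(z) x F_x`. By uniqueness `Pₙ(x) = ∑ₖ [zⁿ]uᵏ xᵏ` as operators, and
applying both sides to `1` gives (ii).
-/

open scoped Polynomial
open PowerSeries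

theorem PowerSeries.eq_of_eq_one_add_mul {R : Type*} [Ring R] {a F G : R⟦X⟧}
    (ha : constantCoeff a = 0) (hF : F = 1 + a * F) (hG : G = 1 + a * G) : F = G := by
  have hunit : IsUnit (1 - a) := by
    rw [isUnit_iff_constantCoeff, map_sub, map_one, ha, sub_zero]
    exact isUnit_one
  refine hunit.mul_left_cancel ?_
  rw [sub_mul, sub_mul, one_mul, one_mul, sub_eq_of_eq_add hF, sub_eq_of_eq_add hG]

theorem add_sub_one_eq_one_add_mul {R : Type*} [Ring R] {a b F G S T : R}
    (hF : F = 1 + a * F) (hG : G = 1 + b * G)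
    (hS : S = 1 + (F - 1) * T) (hT : T = 1 + (G - 1) * S) :
    S + T - 1 = 1 + (a + b) * (S + T - 1) := by
  have hFT : F * T = S + T - 1 := by rw [hS]; noncomm_ring
  have hGS : G * S = S + T - 1 := by rw [hT]; noncomm_ring
  have hSa : S - 1 = a * (S + T - 1) := by
    rw [← hFT, ← mul_assoc, ← sub_eq_of_eq_add' hF, sub_eq_of_eq_add' hS]
  have hTb : T - 1 = b * (S + T - 1) := by
    rw [← hGS, ← mul_assoc, ← sub_eq_of_eq_add' hG, sub_eq_of_eq_add' hT]
  calc S + T - 1 = 1 + (S - 1) + (T - 1) := by noncomm_ring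
    _ = 1 + (a + b) * (S + T - 1) := by rw [hSa, hTb, add_mul, add_assoc]

section GeneratingFunctions

variable {R : Type*} [CommRing R]

/-- The polynomials with `∑ₙ genPoly u n zⁿ = ∑ₖ xᵏ u(z)ᵏ`. -/
noncomputable def genPoly (u : R⟦X⟧) (n : ℕ) : R[X] :=
  ∑ k ∈ Finset.range (n + 1), Polynomial.C (coeff n (u ^ k)) * Polynomial.X ^ k

theorem coeff_genPoly {u : R⟦X⟧} (hu : constantCoeff u = 0) (n k : ℕ) :
    (genPoly u n).coeff k = coeff n (u ^ k) := by
  simp only [genPoly, Polynomial.finsetSum_coeff, Polynomial.coeff_C_mul_X_pow,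
    Finset.sum_ite_eq, Finset.mem_range]
  split_ifs with hk
  · rfl
  · refine (coeff_of_lt_order _ ?_).symm
    exact (Nat.cast_lt.mpr (by omega)).trans_le (le_order_pow_of_constantCoeff_eq_zero k hu)

theorem mk_genPoly {u : R⟦X⟧} (hu : constantCoeff u = 0) :
    mk (genPoly u) = 1 + map Polynomial.C u * C Polynomial.X * mk (genPoly u) := by
  ext n k
  rw [coeff_mk, coeff_genPoly hu, map_add, Polynomial.coeff_add, mul_assoc, coeff_mul,
    Polynomial.finsetSum_coeff]
  simp only [coeff_map, coeff_C_mul, coeff_mk, Polynomial.coeff_C_mul]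
  cases k with
  | zero => simp [coeff_one, apply_ite (Polynomial.coeff · 0)]
  | succ k =>
    simp only [Polynomial.coeff_X_mul, coeff_genPoly hu, pow_succ', coeff_mul]
    simp [coeff_one, apply_ite (Polynomial.coeff · (k + 1)), Polynomial.coeff_one]

variable {A : Type*} [Ring A] [Algebra R A]

noncomputable def genFun (P : ℕ → R[X]) (W : A) : A⟦X⟧ :=
  mk fun n => Polynomial.aeval W (P n)

/-- The series `u(z) W`. -/
noncomputable def smulC (u : R⟦X⟧) (W : A) : A⟦X⟧ :=
  map (algebraMap R A) u * C W

theorem genFun_eq_map (P : ℕ → R[X]) (W : A) :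
    genFun P W = map (Polynomial.aeval W).toRingHom (mk P) := by
  ext n; simp [genFun]

theorem map_genFun {B : Type*} [Ring B] [Algebra R B] (f : A →ₐ[R] B) (P : ℕ → R[X])
    (W : A) : map f.toRingHom (genFun P W) = genFun P (f W) := by
  ext n; simp [genFun, Polynomial.aeval_algHom_apply]

theorem smulC_add (u : R⟦X⟧) (W V : A) : smulC u W + smulC u V = smulC u (W + V) := by
  rw [smulC, smulC, smulC, map_add, mul_add]

theorem constantCoeff_smulC {u : R⟦X⟧} (hu : constantCoeff u = 0) (W : A) :
    constantCoeff (smulC u W) = 0 := by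
  rw [← coeff_zero_eq_constantCoeff_apply, smulC, coeff_mul_C, coeff_map,
    coeff_zero_eq_constantCoeff_apply, hu, map_zero, zero_mul]

theorem smulC_mul_smulC (u v : R⟦X⟧) (W V : A) :
    smulC u W * smulC v V = smulC (u * v) (W * V) := by
  have hcomm : C W * map (algebraMap R A) v = map (algebraMap R A) v * C W := by
    ext n; simp [coeff_mul_C, coeff_C_mul, Algebra.commutes]
  rw [smulC, smulC, smulC, mul_assoc, ← mul_assoc (C W), hcomm, map_mul, map_mul]
  noncomm_ring

theorem genFun_genPoly {u : R⟦X⟧} (hu : constantCoeff u = 0) (W : A) :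
    genFun (genPoly u) W = 1 + smulC u W * genFun (genPoly u) W := by
  have hsmulC : map (Polynomial.aeval W).toRingHom (map Polynomial.C u * C Polynomial.X) =
      smulC u W := by
    ext n; simp [smulC, coeff_mul_C]
  conv_lhs => rw [genFun_eq_map, mk_genPoly hu]
  rw [map_add, map_one, map_mul, hsmulC, genFun_eq_map]

theorem Polynomial.aeval_of_mul_self_eq_zero {W : A} (hW : W * W = 0) (p : R[X]) :
    Polynomial.aeval W p = algebraMap R A (p.coeff 0) + p.coeff 1 • W := by
  conv_lhs => rw [← p.X_mul_divX_add, ← p.divX.X_mul_divX_add]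
  simp only [map_add, map_mul, Polynomial.aeval_X, Polynomial.aeval_C, Polynomial.coeff_divX,
    mul_add, ← mul_assoc, hW, zero_mul, zero_add, ← Algebra.commutes, Algebra.smul_def]
  abel

theorem genFun_of_mul_self_eq_zero {P : ℕ → R[X]} (hP0 : P 0 = 1)
    (hzero : ∀ n, 1 ≤ n → (P n).coeff 0 = 0) {W : A} (hW : W * W = 0) :
    genFun P W = 1 + smulC (mk fun n => (P n).coeff 1) W * genFun P W := by
  have hlin : genFun P W = 1 + smulC (mk fun n => (P n).coeff 1) W := by
    ext n
    rw [genFun, coeff_mk, Polynomial.aeval_of_mul_self_eq_zero hW, map_add, coeff_one, smulC,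
      coeff_mul_C, coeff_map, coeff_mk, Algebra.smul_def]
    rcases n with _ | n
    · simp [hP0]
    · simp [hzero]
  rw [hlin, mul_add, mul_one, smulC_mul_smulC, hW]
  simp [smulC]

end GeneratingFunctions

namespace Composition

def consEquiv (n : ℕ) : (Σ j : Fin (n + 1), Composition (n - j)) ≃ Composition (n + 1) where
  toFun c :=
    { blocks := (c.1 + 1) :: c.2.blocks
      blocks_pos := by
        rintro i (_ | ⟨_, hi⟩)
        exacts [Nat.succ_pos _, c.2.blocks_pos hi]
      blocks_sum := by have := c.1.isLt; simp; omega }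
  invFun c :=
    have hne : c.blocks ≠ [] := by simp [blocks_eq_nil]
    ⟨⟨c.blocks.head hne - 1, by have := c.blocks_le (List.head_mem hne); omega⟩,
      { blocks := c.blocks.tail
        blocks_pos := fun hi => c.blocks_pos (List.mem_of_mem_tail hi)
        blocks_sum := by
          have hsum := c.blocks_sum
          have hpos := c.blocks_pos (List.head_mem hne)
          rw [← List.cons_head_tail hne, List.sum_cons] at hsum
          simp only
          omega }⟩
  left_inv _ := rfl
  right_inv c := by
    have hne : c.blocks ≠ [] := by simp [blocks_eq_nil]
    ext1
    simp only
    rw [Nat.sub_add_cancel (c.blocks_pos (List.head_mem hne)), List.cons_head_tail]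

end Composition

section AlternatingProducts

variable (P : ℕ → ℂ[X])

theorem altProd_consEquiv {n : ℕ} (j : Fin (n + 1)) (c : Composition (n - j))
    (W V : FreeAlgebra ℂ Bool) :
    altProd P (Composition.consEquiv n ⟨j, c⟩) W V =
      Polynomial.aeval W (P (j + 1)) * altProd P c V W := by
  rw [altProd, altProd]
  erw [List.ofFn_succ]
  simp only [List.prod_cons, Fin.val_succ, Nat.succ_mod_two_eq_zero_iff, ← Nat.mod_two_ne_zero,
    ite_not]
  rfl

theorem altProd_of_composition_zero (c : Composition 0) (W V : FreeAlgebra ℂ Bool) :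
    altProd P c W V = 1 := by
  have : c.length = 0 := by simp [Composition.length, c.blocks_eq_nil.mpr rfl]
  simp [altProd, this]

noncomputable def altGenFun (W V : FreeAlgebra ℂ Bool) : (FreeAlgebra ℂ Bool)⟦X⟧ :=
  mk fun n => ∑ c : Composition n, altProd P c W V

variable {P}

theorem altGenFun_eq_one_add_mul (hP0 : P 0 = 1) (W V : FreeAlgebra ℂ Bool) :
    altGenFun P W V = 1 + (genFun P W - 1) * altGenFun P V W := by
  ext n
  rcases n with _ | n
  · simp [altGenFun, genFun, altProd_of_composition_zero, hP0, composition_card]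
  · rw [altGenFun, coeff_mk, ← (Composition.consEquiv n).sum_comp, Fintype.sum_sigma,
      map_add, coeff_one, if_neg n.succ_ne_zero, zero_add, coeff_mul,
      Finset.Nat.sum_antidiagonal_succ, Finset.Nat.sum_antidiagonal_eq_sum_range_succ_mk,
      ← Fin.sum_univ_eq_sum_range
        (fun j => coeff (j + 1) (genFun P W - 1) * coeff (n - j) (altGenFun P V W))]
    simp [altProd_consEquiv, genFun, altGenFun, hP0, Finset.mul_sum, coeff_one]

theorem free_binomial_iff_genFun (hP0 : P 0 = 1) :
    (∀ n, 1 ≤ n →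
      Polynomial.aeval (FreeAlgebra.ι ℂ false + FreeAlgebra.ι ℂ true) (P n) =
        ∑ c : Composition n,
          (altProd P c (FreeAlgebra.ι ℂ false) (FreeAlgebra.ι ℂ true) +
           altProd P c (FreeAlgebra.ι ℂ true) (FreeAlgebra.ι ℂ false))) ↔
    genFun P (FreeAlgebra.ι ℂ false + FreeAlgebra.ι ℂ true) =
      altGenFun P (FreeAlgebra.ι ℂ false) (FreeAlgebra.ι ℂ true) +
        altGenFun P (FreeAlgebra.ι ℂ true) (FreeAlgebra.ι ℂ false) - 1 := by
  rw [PowerSeries.ext_iff]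
  refine forall_congr' fun n => ?_
  rcases n with _ | n
  · simp [genFun, altGenFun, hP0, altProd_of_composition_zero, composition_card]
  · simp [genFun, altGenFun, coeff_one, Finset.sum_add_distrib]

end AlternatingProducts

theorem genFun_add_eq_of_eq_genPoly {P : ℕ → ℂ[X]} (hP0 : P 0 = 1) {u : ℂ⟦X⟧}
    (hu : constantCoeff u = 0) (hP : ∀ n, P n = genPoly u n) (W V : FreeAlgebra ℂ Bool) :
    genFun P (W + V) = altGenFun P W V + altGenFun P V W - 1 := by
  obtain rfl : P = genPoly u := funext hP
  have hsum := add_sub_one_eq_one_add_mul (genFun_genPoly hu W) (genFun_genPoly hu V)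
    (altGenFun_eq_one_add_mul hP0 W V) (altGenFun_eq_one_add_mul hP0 V W)
  rw [smulC_add] at hsum
  exact eq_of_eq_one_add_mul (constantCoeff_smulC hu _) (genFun_genPoly hu _) hsum

theorem mul_mul_self_eq_zero_of_idem {R : Type*} [Ring R] {e x : R} (he : e * e = e)
    (hex : e * x = x * (1 - e)) : x * e * (x * e) = 0 := by
  rw [mul_assoc, ← mul_assoc e, hex, mul_assoc, sub_mul, one_mul, he, sub_self, mul_zero,
    mul_zero]

theorem exists_mul_self_eq_zero_add_eq_lmul_X :
    ∃ E O : Module.End ℂ ℂ[X],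
      E * E = 0 ∧ O * O = 0 ∧ E + O = Algebra.lmul ℂ ℂ[X] Polynomial.X := by
  -- `e = (1 + σ) / 2` projects onto the even polynomials, so `x e` and `x (1 - e)` are
  -- multiplication by `x` on even, resp. odd, polynomials and zero on the others.
  set σ : Module.End ℂ ℂ[X] := (Polynomial.aeval (-Polynomial.X : ℂ[X])).toLinearMap
  set x := Algebra.lmul ℂ ℂ[X] Polynomial.X
  set e : Module.End ℂ ℂ[X] := (2⁻¹ : ℂ) • (1 + σ)
  have hσσ : σ * σ = 1 := LinearMap.ext fun p => by
    simp [σ, ← Polynomial.comp_eq_aeval, Polynomial.comp_assoc]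
  have hσx : σ * x = -(x * σ) := LinearMap.ext fun p => by simp [σ, x]
  have he : e * e = e := by
    simp only [e, smul_mul_smul, add_mul, mul_add, one_mul, mul_one, hσσ]
    module
  have hex : e * x = x * (1 - e) := by
    simp only [e, smul_mul_assoc, mul_smul_comm, add_mul, mul_add, one_mul, mul_one, hσx, mul_sub]
    module
  have he' : (1 - e) * (1 - e) = 1 - e := by
    simp only [sub_mul, mul_sub, one_mul, mul_one, he]; abel
  have hex' : (1 - e) * x = x * (1 - (1 - e)) := by
    rw [sub_mul, one_mul, hex, sub_sub_cancel, mul_sub, mul_one, sub_sub_cancel]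
  exact ⟨x * e, x * (1 - e), mul_mul_self_eq_zero_of_idem he hex,
    mul_mul_self_eq_zero_of_idem he' hex', by rw [← mul_add, add_sub_cancel, mul_one]⟩

theorem aeval_lmul_X_apply_one {R : Type*} [CommRing R] (p : R[X]) :
    Polynomial.aeval (Algebra.lmul R R[X] Polynomial.X) p 1 = p := by
  rw [Polynomial.aeval_algHom_apply, Polynomial.aeval_X_left_apply]
  simp

theorem eq_genPoly_of_genFun_add_eq {P : ℕ → ℂ[X]} (hP0 : P 0 = 1)
    (hzero : ∀ n, 1 ≤ n → (P n).coeff 0 = 0)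
    (h : genFun P (FreeAlgebra.ι ℂ false + FreeAlgebra.ι ℂ true) =
      altGenFun P (FreeAlgebra.ι ℂ false) (FreeAlgebra.ι ℂ true) +
        altGenFun P (FreeAlgebra.ι ℂ true) (FreeAlgebra.ι ℂ false) - 1)
    (n : ℕ) : P n = genPoly (mk fun i => (P i).coeff 1) n := by
  set u : ℂ⟦X⟧ := mk fun i => (P i).coeff 1
  have hu : constantCoeff u = 0 := by simp [u, hP0, Polynomial.coeff_one]
  obtain ⟨E, O, hE, hO, hEO⟩ := exists_mul_self_eq_zero_add_eq_lmul_X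
  let φ : FreeAlgebra ℂ Bool →ₐ[ℂ] Module.End ℂ ℂ[X] :=
    FreeAlgebra.lift ℂ fun b => if b then O else E
  have hφX : φ (FreeAlgebra.ι ℂ false) = E := by simp [φ]
  have hφY : φ (FreeAlgebra.ι ℂ true) = O := by simp [φ]
  have hφ (W V) : map φ.toRingHom (altGenFun P W V) =
      1 + (genFun P (φ W) - 1) * map φ.toRingHom (altGenFun P V W) := by
    rw [altGenFun_eq_one_add_mul hP0, map_add, map_one, map_mul, map_sub, map_one, map_genFun]
  have hsum := add_sub_one_eq_one_add_mul (genFun_of_mul_self_eq_zero hP0 hzero hE)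
    (genFun_of_mul_self_eq_zero hP0 hzero hO) (hφX ▸ hφ _ _) (hφY ▸ hφ _ _)
  have hx : genFun P (Algebra.lmul ℂ ℂ[X] Polynomial.X) =
      map φ.toRingHom (altGenFun P (FreeAlgebra.ι ℂ false) (FreeAlgebra.ι ℂ true)) +
        map φ.toRingHom (altGenFun P (FreeAlgebra.ι ℂ true) (FreeAlgebra.ι ℂ false)) - 1 := by
    rw [← hEO, ← hφX, ← hφY, ← map_add, ← map_genFun, h, map_sub, map_add, map_one]
  rw [smulC_add, hEO, ← hx] at hsum
  have huniq := eq_of_eq_one_add_mul (constantCoeff_smulC hu _) hsum (genFun_genPoly hu _)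
  have := congrArg (fun F : (Module.End ℂ ℂ[X])⟦X⟧ => coeff n F 1) huniq
  simpa only [genFun, coeff_mk, aeval_lmul_X_apply_one] using this

/-- the free binomial identity. A sequence of monic polynomials `P_n` of degree
`n` with `P_0 = 1` and `P_n(0) = 0` for `n ≥ 1` satisfies the free (noncommutative) binomial
expansion over all compositions of `n` if and only if its generating function equals
`1/(1 − u(z)x) = Σ_k x^k u(z)^k` for some `u ∈ 𝒫₀,₁`. -/
theorem stmt_15 (P : ℕ → Polynomial ℂ)
    (hP0 : P 0 = 1)
    (hmonic : ∀ n, (P n).Monic) (hdeg : ∀ n, (P n).natDegree = n)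
    (hzero : ∀ n, 1 ≤ n → (P n).coeff 0 = 0) :
    (∀ n, 1 ≤ n →
      Polynomial.aeval (FreeAlgebra.ι ℂ false + FreeAlgebra.ι ℂ true) (P n) =
        ∑ c : Composition n,
          (altProd P c (FreeAlgebra.ι ℂ false) (FreeAlgebra.ι ℂ true) +
           altProd P c (FreeAlgebra.ι ℂ true) (FreeAlgebra.ι ℂ false)))
    ↔
    (∃ u : PowerSeries ℂ,
      PowerSeries.constantCoeff u = 0 ∧ PowerSeries.coeff 1 u = 1 ∧
      ∀ n : ℕ, P n = ∑ k ∈ Finset.range (n + 1),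
        Polynomial.C (PowerSeries.coeff n (u ^ k)) * Polynomial.X ^ k) := by
  rw [free_binomial_iff_genFun hP0]
  constructor
  · intro h
    refine ⟨mk fun i => (P i).coeff 1, by simp [hP0, Polynomial.coeff_one], ?_,
      eq_genPoly_of_genFun_add_eq hP0 hzero h⟩
    simpa [hdeg 1] using (hmonic 1).coeff_natDegree
  · rintro ⟨u, hu, -, hP⟩
    exact genFun_add_eq_of_eq_genPoly hP0 hu hP _ _
end

section
/- Let (P_n)_{n≥0} be polynomials in ℂ[x] with each P_n monic of degree n, P_0 = 1 and P_n(0) = 0 for n ≥ 1. In the ring ℂ[X,Y][[z]] of formal power series in z with coefficients in the polynomial ring in two commuting variables X, Y, define H_W = Σ_{n≥0} P_n(W) z^n for W ∈ {X, Y, X+Y}; each H_W is invertible since its constant z-coefficient is 1. Then the following are equivalent: (i) H_{X+Y}^{−1} = H_X^{−1} + H_Y^{−1} − 1; (ii) there exists u ∈ 𝒫₀,₁ such that Σ_{n≥0} P_n(x) z^n = Σ_{k≥0} x^k u(z)^k in ℂ[x][[z]] (i.e. the generating function equals 1/(1 − u(z)x)). -/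
/-!
Over `R[x]`, let `G = H⁻¹` where `H = Σ Pₙ(x) zⁿ`. Substituting `x ↦ X + Y`, `X`, `Y` commutes with
inversion, so (i) says that every `z`-coefficient of `1 - G` is an additive polynomial. In
characteristic zero an additive polynomial is `c • x` (it is linear on `ℕ ⊆ R`), so (i) says
exactly `G = 1 - x u(z)` for some `u`, i.e. `H = 1 / (1 - x u(z)) = Σ xᵏ u(z)ᵏ`; the constant term
of `u` vanishes because `G(0) = 1`, and `u'(0) = 1` because `P₁ = u'(0) x` is monic.
-/

open Finset
open scoped Polynomial PowerSeries Ring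

theorem map_ringInverse {M N F : Type*} [MonoidWithZero M] [MonoidWithZero N] [FunLike F M N]
    [MonoidHomClass F M N] (f : F) {x : M} (hx : IsUnit x) : (f x)⁻¹ʳ = f x⁻¹ʳ := by
  rw [← mul_one (f x)⁻¹ʳ, Ring.inverse_mul_eq_iff_eq_mul _ _ _ (hx.map f), ← map_mul,
    Ring.mul_inverse_cancel x hx, map_one]

namespace Polynomial

variable {R : Type*} [CommRing R] [IsDomain R] [CharZero R]

theorem eq_C_mul_X_of_eval_add {q : R[X]} (hq : ∀ a b, q.eval (a + b) = q.eval a + q.eval b) :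
    q = C (q.coeff 1) * X := by
  have hnat : ∀ n : ℕ, q.eval (n : R) = n * q.eval 1 := by
    intro n
    induction n with
    | zero => simpa using hq 0 0
    | succ m ih => rw [Nat.cast_succ, hq, ih]; ring
  have hlin : q = C (q.eval 1) * X := by
    refine eq_of_infinite_eval_eq _ _ ((Set.infinite_range_of_injective Nat.cast_injective).mono ?_)
    rintro _ ⟨n, rfl⟩
    simp [hnat n, mul_comm (n : R)]
  rw [hlin]
  simp

theorem aeval_X_add_X_eq_add_iff (q : R[X]) :
    aeval (MvPolynomial.X 0 + MvPolynomial.X 1 : MvPolynomial (Fin 2) R) q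
        = aeval (MvPolynomial.X 0) q + aeval (MvPolynomial.X 1) q ↔
      q = C (q.coeff 1) * X := by
  refine ⟨fun h => eq_C_mul_X_of_eval_add fun a b => ?_, fun h => ?_⟩
  · have := congrArg (MvPolynomial.aeval ![a, b]) h
    simp only [map_add, ← aeval_algHom_apply, MvPolynomial.aeval_X] at this
    simpa using this
  · rw [h]; simp [mul_add]

end Polynomial

namespace PowerSeries

variable {R : Type*} [CommRing R]

theorem coeff_eq_sum_pow_of_mul_one_sub_eq_one {F V : R⟦X⟧} (hV : constantCoeff V = 0)
    (h : F * (1 - V) = 1) (n : ℕ) : coeff n F = ∑ k ∈ range (n + 1), coeff n (V ^ k) := by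
  have htrunc : F * (1 - V ^ (n + 1)) = ∑ k ∈ range (n + 1), V ^ k := by
    rw [← mul_neg_geom_sum, ← mul_assoc, h, one_mul]
  have htail : coeff n (F * V ^ (n + 1)) = 0 :=
    X_pow_dvd_iff.mp ((pow_dvd_pow_of_dvd (X_dvd_iff.mpr hV) _).mul_left F) n n.lt_succ_self
  calc coeff n F = coeff n (F * (1 - V ^ (n + 1))) + coeff n (F * V ^ (n + 1)) := by
        rw [← map_add]; ring_nf
    _ = ∑ k ∈ range (n + 1), coeff n (V ^ k) := by rw [htrunc, htail, add_zero, map_sum]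

theorem mul_one_sub_eq_one_iff {F V : R⟦X⟧} (hV : constantCoeff V = 0) :
    F * (1 - V) = 1 ↔ ∀ n, coeff n F = ∑ k ∈ range (n + 1), coeff n (V ^ k) := by
  refine ⟨coeff_eq_sum_pow_of_mul_one_sub_eq_one hV, fun hF => ?_⟩
  have hunit : IsUnit (1 - V) := isUnit_iff_constantCoeff.mpr (by simp [hV])
  have hinv := Ring.inverse_mul_cancel _ hunit
  have : F = Ring.inverse (1 - V) := ext fun n => by
    rw [hF n, coeff_eq_sum_pow_of_mul_one_sub_eq_one hV hinv n]
  rw [this, hinv]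

theorem coeff_pow_C_X_mul_map_C (u : R⟦X⟧) (n k : ℕ) :
    coeff n ((C Polynomial.X * map Polynomial.C u) ^ k)
      = Polynomial.C (coeff n (u ^ k)) * Polynomial.X ^ k := by
  rw [mul_pow, ← map_pow, ← map_pow, coeff_C_mul, coeff_map, mul_comm]

theorem one_sub_eq_C_X_mul_map_C_iff {F G : R[X]⟦X⟧} (hF : constantCoeff F = 1) (hFG : F * G = 1)
    (u : R⟦X⟧) :
    1 - G = C Polynomial.X * map Polynomial.C u ↔ constantCoeff u = 0 ∧
      ∀ n, coeff n F = ∑ k ∈ range (n + 1), Polynomial.C (coeff n (u ^ k)) * Polynomial.X ^ k := by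
  have hG0 : constantCoeff G = 1 := by
    simpa [hF] using congrArg constantCoeff hFG
  have hV : constantCoeff (C Polynomial.X * map Polynomial.C u) = 0 ↔ constantCoeff u = 0 := by
    rw [map_mul, constantCoeff_C, ← coeff_zero_eq_constantCoeff_apply, coeff_map,
      coeff_zero_eq_constantCoeff_apply]
    simp
  simp only [← coeff_pow_C_X_mul_map_C]
  constructor
  · intro h
    have hu0 : constantCoeff u = 0 := hV.mp (by rw [← h, map_sub, hG0, map_one, sub_self])
    refine ⟨hu0, (mul_one_sub_eq_one_iff (hV.mpr hu0)).mp ?_⟩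
    linear_combination hFG + F * h
  · rintro ⟨hu0, hcoeff⟩
    have hinv := (mul_one_sub_eq_one_iff (hV.mpr hu0)).mpr hcoeff
    linear_combination G * hinv - (1 - C Polynomial.X * map Polynomial.C u) * hFG

variable [IsDomain R] [CharZero R]

local notation "x₀" => (MvPolynomial.X 0 : MvPolynomial (Fin 2) R)
local notation "x₁" => (MvPolynomial.X 1 : MvPolynomial (Fin 2) R)
local notation "ev" W => (Polynomial.aeval (R := R) W : R[X] →+* MvPolynomial (Fin 2) R)

theorem map_aeval_X_add_X_eq_add_iff (G : R[X]⟦X⟧) :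
    map (ev (x₀ + x₁)) G = map (ev x₀) G + map (ev x₁) G ↔
      ∃ u : R⟦X⟧, G = C Polynomial.X * map Polynomial.C u := by
  simp only [PowerSeries.ext_iff, map_add, coeff_map, coeff_C_mul]
  constructor
  · intro h
    refine ⟨mk fun n => (coeff n G).coeff 1, fun n => ?_⟩
    rw [coeff_mk, mul_comm]
    exact (Polynomial.aeval_X_add_X_eq_add_iff _).mp (h n)
  · rintro ⟨u, hu⟩ n
    rw [hu n]
    simp [mul_add]

theorem ringInverse_map_aeval_X_add_X_iff {F : R[X]⟦X⟧} (hF : constantCoeff F = 1) :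
    (map (ev (x₀ + x₁)) F)⁻¹ʳ = (map (ev x₀) F)⁻¹ʳ + (map (ev x₁) F)⁻¹ʳ - 1 ↔
      ∃ u : R⟦X⟧, constantCoeff u = 0 ∧
        ∀ n, coeff n F = ∑ k ∈ range (n + 1), Polynomial.C (coeff n (u ^ k)) * Polynomial.X ^ k := by
  have hunit : IsUnit F := isUnit_iff_constantCoeff.mpr (hF ▸ isUnit_one)
  have hFG : F * F⁻¹ʳ = 1 := Ring.mul_inverse_cancel F hunit
  simp only [map_ringInverse _ hunit]
  generalize F⁻¹ʳ = G at hFG ⊢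
  have hsub : map (ev (x₀ + x₁)) G = map (ev x₀) G + map (ev x₁) G - 1 ↔
      map (ev (x₀ + x₁)) (1 - G) = map (ev x₀) (1 - G) + map (ev x₁) (1 - G) := by
    simp only [map_sub, map_one]
    constructor <;> intro h <;> linear_combination -h
  rw [hsub, map_aeval_X_add_X_eq_add_iff]
  exact exists_congr (one_sub_eq_C_X_mul_map_C_iff hF hFG)

end PowerSeries

theorem stmt_16_general (P : ℕ → Polynomial ℂ)
    (hP0 : P 0 = 1)
    (hmonic : ∀ n, (P n).Monic)
    (H : MvPolynomial (Fin 2) ℂ → PowerSeries (MvPolynomial (Fin 2) ℂ))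
    (hH : ∀ W, H W = PowerSeries.mk fun n => Polynomial.aeval W (P n)) :
    (Ring.inverse (H (MvPolynomial.X 0 + MvPolynomial.X 1)) =
        Ring.inverse (H (MvPolynomial.X 0)) + Ring.inverse (H (MvPolynomial.X 1)) - 1)
    ↔
    (∃ u : PowerSeries ℂ,
      PowerSeries.constantCoeff u = 0 ∧ PowerSeries.coeff 1 u = 1 ∧
      ∀ n : ℕ, P n = ∑ k ∈ Finset.range (n + 1),
        Polynomial.C (PowerSeries.coeff n (u ^ k)) * Polynomial.X ^ k) := by
  let F : ℂ[X]⟦X⟧ := PowerSeries.mk P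
  have hHF : ∀ W, H W = PowerSeries.map (Polynomial.aeval (R := ℂ) W : ℂ[X] →+* _) F := fun W => by
    ext1 n
    simp [hH, F]
  have hF0 : PowerSeries.constantCoeff F = 1 := by simp [F, hP0]
  rw [hHF, hHF, hHF, PowerSeries.ringInverse_map_aeval_X_add_X_iff hF0]
  simp only [F, PowerSeries.coeff_mk]
  refine exists_congr fun u => ⟨fun ⟨hu0, hP⟩ => ⟨hu0, ?_, hP⟩, fun ⟨hu0, _, hP⟩ => ⟨hu0, hP⟩⟩
  have hP1 : P 1 = Polynomial.C (PowerSeries.coeff 1 u) * Polynomial.X := by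
    simpa [Finset.sum_range_succ] using hP 1
  simpa [hP1, Polynomial.Monic, Polynomial.leadingCoeff_X] using hmonic 1

/-- for a sequence of monic polynomials `P_n` of degree `n` with `P_0 = 1` and
`P_n(0) = 0` for `n ≥ 1`, setting `H_W = Σ_n P_n(W) zⁿ` in `ℂ[X,Y][[z]]`, the free cumulant
additivity identity `H_{X+Y}⁻¹ = H_X⁻¹ + H_Y⁻¹ − 1` holds if and only if the generating
function equals `1/(1 − u(z)x) = Σ_k x^k u(z)^k` for some `u ∈ 𝒫₀,₁`.
(`Ring.inverse` is the genuine multiplicative inverse here, since each `H_W` has invertible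
constant coefficient `P_0(W) = 1`.) -/
theorem stmt_16 (P : ℕ → Polynomial ℂ)
    (hP0 : P 0 = 1)
    (hmonic : ∀ n, (P n).Monic) (hdeg : ∀ n, (P n).natDegree = n)
    (hzero : ∀ n, 1 ≤ n → (P n).coeff 0 = 0)
    (H : MvPolynomial (Fin 2) ℂ → PowerSeries (MvPolynomial (Fin 2) ℂ))
    (hH : ∀ W, H W = PowerSeries.mk fun n => Polynomial.aeval W (P n)) :
    (Ring.inverse (H (MvPolynomial.X 0 + MvPolynomial.X 1)) =
        Ring.inverse (H (MvPolynomial.X 0)) + Ring.inverse (H (MvPolynomial.X 1)) - 1)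
    ↔
    (∃ u : PowerSeries ℂ,
      PowerSeries.constantCoeff u = 0 ∧ PowerSeries.coeff 1 u = 1 ∧
      ∀ n : ℕ, P n = ∑ k ∈ Finset.range (n + 1),
        Polynomial.C (PowerSeries.coeff n (u ^ k)) * Polynomial.X ^ k) :=
  stmt_16_general P hP0 hmonic H hH
end

section
/- Let (P_n)_{n≥0} be polynomials in two commuting variables, P_n(x,t) ∈ ℂ[x,t], such that each P_n is monic of degree n as a polynomial in x and P_0 = 1. In the ring ℂ[X,Y,S,T][[z]] define H_1 = Σ_{n≥0} P_n(X,S) z^n, H_2 = Σ_{n≥0} P_n(Y,T) z^n, H_3 = Σ_{n≥0} P_n(X+Y, S+T) z^n; each is invertible since its constant z-coefficient is 1. If H_3^{−1} = H_1^{−1} + H_2^{−1} − 1, then there exist formal power series u, f over ℂ with u(0) = 0, u'(0) = 1, f(0) = 0 such that (1 + f(z)·t − u(z)·x) · Σ_{n≥0} P_n(x,t) z^n = 1 in ℂ[x,t][[z]]; that is, the generating function equals 1/(1 + t f(z) − x u(z)), the form of an (algebraic) free Sheffer system. -/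
/-- Evaluation `p(W, V)` of `p ∈ ℂ[x,t]` (with `x` the outer and `t` the inner variable)
at elements `W`, `V` of a commutative ℂ-algebra. -/
noncomputable def ev2 {R : Type*} [CommRing R] [Algebra ℂ R] (W V : R)
    (p : Polynomial (Polynomial ℂ)) : R :=
  Polynomial.eval₂ (Polynomial.aeval V : Polynomial ℂ →ₐ[ℂ] R).toRingHom W p

/-!
Let `G = H⁻¹`, where `H = Σ Pₙ(x, t) zⁿ`. The hypothesis says that every coefficient `g` of
`G - 1` is additive: `g(X + Y, S + T) = g(X, S) + g(Y, T)`. Over ℂ an additive polynomial is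
linear: restricted to a line through the origin it is an additive one-variable polynomial, hence
homogeneous of degree one, and additivity then splits it as `g(x, t) = g(1, 0) x + g(0, 1) t`.
So `G = 1 + t f(z) - x u(z)`, and comparing the coefficients of `z⁰` and `z¹` in `G H = 1` gives
`g₀ = 0` and `g₁ = -P₁`, i.e. `f(0) = u(0) = 0` and `u'(0) = 1`.
-/

open Polynomial

/-- `α x + β t`, with `x` the outer and `t` the inner variable. -/
noncomputable def linearForm {R : Type*} [CommRing R] (α β : R) : R[X][X] :=
  C (C α) * X + C (C β * X)

theorem Polynomial.eq_C_mul_X_of_eval_add_s17 {R : Type*} [CommRing R] [IsDomain R] [CharZero R]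
    {q : R[X]} (h : ∀ a b : R, q.eval (a + b) = q.eval a + q.eval b) :
    q = C (q.eval 1) * X := by
  have hnat : ∀ n : ℕ, q.eval (n : R) = q.eval 1 * n := by
    intro n
    induction n with
    | zero => simpa using h 0 0
    | succ n ih => push_cast; rw [h, ih]; ring
  refine eq_of_infinite_eval_eq _ _ (Set.infinite_range_of_injective Nat.cast_injective |>.mono ?_)
  rintro _ ⟨n, rfl⟩
  simp [hnat]

section Ev2

variable {A B : Type*} [CommRing A] [Algebra ℂ A] [CommRing B] [Algebra ℂ B]

theorem AlgHom.map_ev2 (ψ : A →ₐ[ℂ] B) (W V : A) (p : ℂ[X][X]) :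
    ψ (ev2 W V p) = ev2 (ψ W) (ψ V) p := by
  simp only [ev2, ← AlgHom.coe_toRingHom, Polynomial.hom_eval₂]
  congr 1
  ext <;> simp

theorem ev2_eq_eval_map (a c : ℂ) (p : ℂ[X][X]) :
    ev2 a c p = (p.map (evalRingHom c)).eval a := by
  rw [ev2, eval₂_eq_eval_map]
  congr 2

theorem ev2_linearForm (a c α β : ℂ) : ev2 a c (linearForm α β) = α * a + β * c := by
  simp [ev2, linearForm]

theorem eq_of_forall_ev2_eq {p q : ℂ[X][X]} (h : ∀ a c : ℂ, ev2 a c p = ev2 a c q) : p = q := by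
  have hmap : ∀ c : ℂ, p.map (evalRingHom c) = q.map (evalRingHom c) := fun c =>
    Polynomial.funext fun a => by rw [← ev2_eq_eval_map, ← ev2_eq_eval_map, h]
  ext1 i
  refine Polynomial.funext fun c => ?_
  simpa using congrArg (coeff · i) (hmap c)

noncomputable def ev2Hom (W V : A) : ℂ[X][X] →+* A :=
  eval₂RingHom (aeval V).toRingHom W

theorem ev2Hom_apply (W V : A) (p : ℂ[X][X]) : ev2Hom W V p = ev2 W V p := rfl

theorem PowerSeries.mk_ev2_eq_map (W V : A) (P : ℕ → ℂ[X][X]) :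
    PowerSeries.mk (fun n => ev2 W V (P n)) = PowerSeries.map (ev2Hom W V) (PowerSeries.mk P) :=
  PowerSeries.ext fun n => by simp [ev2Hom_apply]

end Ev2

section Additive

variable {p : ℂ[X][X]} (h : ∀ a b c d : ℂ, ev2 (a + b) (c + d) p = ev2 a c p + ev2 b d p)
include h

theorem ev2_mul_of_ev2_add (a c s : ℂ) : ev2 (a * s) (c * s) p = ev2 a c p * s := by
  set q : ℂ[X] := ev2 (C a * X) (C c * X) p
  have hq : ∀ s, q.eval s = ev2 (a * s) (c * s) p := fun s => by
    rw [← coe_aeval_eq_eval, AlgHom.map_ev2]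
    simp
  have hlin := Polynomial.eq_C_mul_X_of_eval_add_s17 (q := q) fun s t => by simp only [hq, mul_add, h]
  rw [← hq, hlin]
  simp [hq]

theorem eq_linearForm_of_ev2_add :
    p = linearForm ((p.coeff 1).coeff 0) ((p.coeff 0).coeff 1) := by
  have hp : p = linearForm (ev2 1 0 p) (ev2 0 1 p) := by
    refine eq_of_forall_ev2_eq fun a c => ?_
    rw [ev2_linearForm, ← ev2_mul_of_ev2_add h, ← ev2_mul_of_ev2_add h, ← h]
    simp
  have hcoeff : ∀ α β : ℂ, p = linearForm α β →
      p = linearForm ((p.coeff 1).coeff 0) ((p.coeff 0).coeff 1) := by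
    rintro α β rfl
    simp [linearForm]
  exact hcoeff _ _ hp

end Additive

open MvPolynomial in
theorem ev2_add_of_ev2_X_add {p : ℂ[X][X]}
    (h : ev2 (X 0 + X 1 : MvPolynomial (Fin 4) ℂ) (X 2 + X 3) p =
      ev2 (X 0) (X 2) p + ev2 (X 1) (X 3) p)
    (a b c d : ℂ) : ev2 (a + b) (c + d) p = ev2 a c p + ev2 b d p := by
  have h' := congrArg (MvPolynomial.aeval ![a, b, c, d]) h
  simp only [map_add, AlgHom.map_ev2] at h'
  simpa using h'

theorem map_ringInverse_s17 {M₀ N₀ F : Type*} [MonoidWithZero M₀] [MonoidWithZero N₀]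
    [FunLike F M₀ N₀] [MonoidHomClass F M₀ N₀] (f : F) {a : M₀} (ha : IsUnit a) :
    Ring.inverse (f a) = f (Ring.inverse a) := by
  obtain ⟨u, rfl⟩ := ha
  simpa using Ring.inverse_unit (Units.map (f : M₀ →* N₀) u)

namespace PowerSeries

section MulEqOne

variable {R : Type*} [CommRing R] {G H : R⟦X⟧} (h : G * H = 1) (hH : constantCoeff H = 1)
include h hH

theorem constantCoeff_eq_one_of_mul_eq_one : constantCoeff G = 1 := by
  simpa [hH] using congrArg constantCoeff h

theorem coeff_one_eq_neg_of_mul_eq_one : coeff 1 G = -coeff 1 H := by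
  have h1 := congrArg (coeff 1) h
  simp only [coeff_mul, Finset.Nat.antidiagonal_succ, Finset.Nat.antidiagonal_zero] at h1
  simp [constantCoeff_eq_one_of_mul_eq_one h hH, hH] at h1
  linear_combination h1

end MulEqOne

theorem eq_of_coeff_eq_linearForm {R : Type*} [CommRing R] {K : PowerSeries R[X][X]}
    {α β : ℕ → R} (hK : ∀ n, coeff n K = linearForm (α n) (β n)) :
    K = C (Polynomial.C Polynomial.X) * map (Polynomial.C.comp Polynomial.C) (mk β) -
      C Polynomial.X * map (Polynomial.C.comp Polynomial.C) (mk fun n => -α n) := by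
  ext1 n
  rw [hK]
  simp [linearForm]
  ring

end PowerSeries

open MvPolynomial in
theorem ev2_coeff_sub_one_add {G : PowerSeries ℂ[X][X]}
    (h : PowerSeries.map (ev2Hom (X 0 + X 1 : MvPolynomial (Fin 4) ℂ) (X 2 + X 3)) G =
      PowerSeries.map (ev2Hom (X 0) (X 2)) G + PowerSeries.map (ev2Hom (X 1) (X 3)) G - 1)
    (n : ℕ) (a b c d : ℂ) :
    ev2 (a + b) (c + d) (PowerSeries.coeff n (G - 1)) =
      ev2 a c (PowerSeries.coeff n (G - 1)) + ev2 b d (PowerSeries.coeff n (G - 1)) := by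
  refine ev2_add_of_ev2_X_add ?_ a b c d
  simp only [← ev2Hom_apply, ← PowerSeries.coeff_map, ← map_add]
  congr 1
  rw [map_sub, map_sub, map_sub, map_one, map_one, map_one, h]
  ring

/-- if the generating functions `H_i` (in `ℂ[X,Y,S,T][[z]]`) of a family
`P_n(x,t)`, monic of degree `n` in `x`, satisfy `H₃⁻¹ = H₁⁻¹ + H₂⁻¹ − 1`, then the
generating function has the free Sheffer form `1/(1 + t f(z) − x u(z))` with `u(0) = 0`,
`u'(0) = 1`, `f(0) = 0`. -/
theorem stmt_17 (P : ℕ → Polynomial (Polynomial ℂ))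
    (hP0 : P 0 = 1)
    (hmonic : ∀ n, (P n).Monic) (hdeg : ∀ n, (P n).natDegree = n)
    (hsheffer :
      Ring.inverse (PowerSeries.mk fun n =>
          ev2 (MvPolynomial.X (0 : Fin 4) + MvPolynomial.X 1)
            (MvPolynomial.X (2 : Fin 4) + MvPolynomial.X 3) (P n) :
            PowerSeries (MvPolynomial (Fin 4) ℂ)) =
        Ring.inverse (PowerSeries.mk fun n =>
          ev2 (MvPolynomial.X (0 : Fin 4)) (MvPolynomial.X (2 : Fin 4)) (P n)) +
        Ring.inverse (PowerSeries.mk fun n =>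
          ev2 (MvPolynomial.X (1 : Fin 4)) (MvPolynomial.X (3 : Fin 4)) (P n)) - 1) :
    ∃ u f : PowerSeries ℂ,
      PowerSeries.constantCoeff u = 0 ∧ PowerSeries.coeff 1 u = 1 ∧
      PowerSeries.constantCoeff f = 0 ∧
      (1 + PowerSeries.C (Polynomial.C Polynomial.X : Polynomial (Polynomial ℂ)) *
            PowerSeries.map
              ((Polynomial.C : Polynomial ℂ →+* Polynomial (Polynomial ℂ)).comp
                (Polynomial.C : ℂ →+* Polynomial ℂ)) f
          - PowerSeries.C (Polynomial.X : Polynomial (Polynomial ℂ)) *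
            PowerSeries.map
              ((Polynomial.C : Polynomial ℂ →+* Polynomial (Polynomial ℂ)).comp
                (Polynomial.C : ℂ →+* Polynomial ℂ)) u) *
        PowerSeries.mk (fun n => P n) = 1 := by
  simp only [PowerSeries.mk_ev2_eq_map] at hsheffer
  set H : PowerSeries ℂ[X][X] := PowerSeries.mk P
  have hH0 : PowerSeries.constantCoeff H = 1 := by simp [H, hP0]
  have hHunit : IsUnit H := PowerSeries.isUnit_iff_constantCoeff.mpr (hH0 ▸ isUnit_one)
  simp only [map_ringInverse_s17 _ hHunit] at hsheffer
  set G := Ring.inverse H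
  have hGH : G * H = 1 := Ring.inverse_mul_cancel H hHunit
  set k : ℕ → ℂ[X][X] := fun n => PowerSeries.coeff n (G - 1)
  have hlin (n : ℕ) := eq_linearForm_of_ev2_add (ev2_coeff_sub_one_add hsheffer n)
  have hk0 : k 0 = 0 := by simp [k, PowerSeries.constantCoeff_eq_one_of_mul_eq_one hGH hH0]
  have hk1 : k 1 = -P 1 := by
    simp [k, PowerSeries.coeff_one_eq_neg_of_mul_eq_one hGH hH0, H]
  have hP1 : (P 1).coeff 1 = 1 := by simpa [hdeg 1] using (hmonic 1).coeff_natDegree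
  refine ⟨PowerSeries.mk fun n => -((k n).coeff 1).coeff 0,
    PowerSeries.mk fun n => ((k n).coeff 0).coeff 1,
    by simp [hk0], by simp [hk1, hP1], by simp [hk0], ?_⟩
  rw [add_sub_assoc, ← PowerSeries.eq_of_coeff_eq_linearForm hlin, add_sub_cancel, hGH]
end

section
/- Fix a β-sequence [·]_β, and let P_n(x) = ∏_{k=0}^{n−1} (x − [k]_β) for n ≥ 0 (so P_0 = 1); this is an admissible sequence since [0]_β = 0. Let A be its lowering operator, the ℂ-linear operator on ℂ[x] with A P_0 = 0 and A P_n = [n]_β P_{n−1} for n ≥ 1. If A commutes with D_β on ℂ[x] (A ∘ D_β = D_β ∘ A), then either [n]_β = n for all n ≥ 0, or [n]_β = 1 for all n ≥ 1. -/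
/-!
Since the lowering operator `A` lowers degrees, the coefficient of `x^m` in `A p` for
`deg p ≤ m + 2` depends only on the coefficients of `p` at `x^(m+1)`, `x^(m+2)` and on the top
two coefficients of the `P_n`. For the falling factorial the subleading coefficient of `P_n` is
`-∑_{k<n} [k]`, so comparing the coefficients of `x^m` in `A (D P_{m+3}) = D (A P_{m+3})` gives a
recurrence (`SubleadingRel`) which determines `[m+3]` from `[0], …, [m+2]` whenever its leading
factor does not vanish, as is the case along the two solutions `[n] = n` and `[n] = 1` (`n ≥ 1`).
One more comparison, of the constant terms for `P_4`, together with the recurrence at `m = 0, 1`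
gives `[2] ([2] - 1)^2 ([2] - 2) = 0`, so `[2] ∈ {1, 2}`.
-/

open Polynomial Finset

section Lowering

variable {R : Type*} [CommRing R] {b : ℕ → R} {P : ℕ → R[X]} {D A : Module.End R R[X]}

theorem coeff_apply_of_apply_X_pow (hb0 : b 0 = 0) (hD : ∀ n, D (X ^ n) = b n • X ^ (n - 1))
    (p : R[X]) (j : ℕ) : (D p).coeff j = b (j + 1) * p.coeff (j + 1) := by
  induction p using Polynomial.induction_on' with
  | add p q hp hq => rw [map_add, coeff_add, hp, hq, coeff_add, mul_add]
  | monomial n c =>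
    rw [← C_mul_X_pow_eq_monomial, ← smul_eq_C_mul, map_smul, hD, coeff_smul, coeff_smul,
      coeff_smul, coeff_X_pow, coeff_X_pow]
    rcases n with _ | n
    · simp [hb0]
    · obtain rfl | h := eq_or_ne j n <;> simp [*, mul_comm]

theorem degree_apply_le_of_apply_X_pow (hb0 : b 0 = 0)
    (hD : ∀ n, D (X ^ n) = b n • X ^ (n - 1)) {p : R[X]} {n : ℕ} (hp : p.degree ≤ ↑(n + 1)) :
    (D p).degree ≤ n := by
  rw [degree_le_iff_coeff_zero] at hp ⊢
  intro j hj
  have hj' : n < j := by exact_mod_cast hj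
  rw [coeff_apply_of_apply_X_pow hb0 hD, hp (j + 1) (by exact_mod_cast Nat.succ_lt_succ hj'),
    mul_zero]

theorem coeff_self_of_monic (hmon : ∀ n, (P n).Monic) (hdeg : ∀ n, (P n).natDegree = n)
    (n : ℕ) : (P n).coeff n = 1 := by
  simpa [hdeg n] using (hmon n).coeff_natDegree

theorem degree_sub_coeff_smul_le (hmon : ∀ n, (P n).Monic) (hdeg : ∀ n, (P n).natDegree = n)
    {p : R[X]} {n : ℕ} (hp : p.degree ≤ ↑(n + 1)) :
    (p - p.coeff (n + 1) • P (n + 1)).degree ≤ n := by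
  rw [degree_le_iff_coeff_zero] at hp ⊢
  intro j hj
  rw [coeff_sub, coeff_smul, smul_eq_mul, sub_eq_zero]
  obtain rfl | hj := eq_or_lt_of_le (show n + 1 ≤ j by exact_mod_cast hj)
  · rw [coeff_self_of_monic hmon hdeg, mul_one]
  · rw [hp j (by exact_mod_cast hj),
      coeff_eq_zero_of_natDegree_lt (p := P (n + 1)) (by rw [hdeg]; exact hj), mul_zero]

theorem degree_apply_lt_of_degree_le (hb0 : b 0 = 0) (hmon : ∀ n, (P n).Monic)
    (hdeg : ∀ n, (P n).natDegree = n) (hA : ∀ n, A (P n) = b n • P (n - 1)) {p : R[X]} {n : ℕ}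
    (hp : p.degree ≤ n) : (A p).degree < n := by
  induction n generalizing p with
  | zero =>
    have hP0 : P 0 = 1 := eq_one_of_monic_natDegree_zero (hmon 0) (hdeg 0)
    rw [eq_C_of_degree_le_zero hp, ← mul_one (C _), ← smul_eq_C_mul, ← hP0, map_smul, hA, hb0]
    simp
  | succ n ih =>
    have hq := ih (degree_sub_coeff_smul_le hmon hdeg hp)
    have hPn : (P n).degree < ↑(n + 1) :=
      (degree_le_of_natDegree_le (hdeg n).le).trans_lt (by exact_mod_cast n.lt_succ_self)
    rw [← sub_add_cancel p (p.coeff (n + 1) • P (n + 1)), map_add, map_smul, hA]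
    refine (degree_add_le _ _).trans_lt (max_lt (hq.trans (by exact_mod_cast n.lt_succ_self)) ?_)
    exact (degree_smul_le _ _).trans_lt ((degree_smul_le _ _).trans_lt hPn)

theorem coeff_apply_of_degree_le (hb0 : b 0 = 0) (hmon : ∀ n, (P n).Monic)
    (hdeg : ∀ n, (P n).natDegree = n) (hA : ∀ n, A (P n) = b n • P (n - 1)) {p : R[X]} {m : ℕ}
    (hp : p.degree ≤ ↑(m + 1)) : (A p).coeff m = b (m + 1) * p.coeff (m + 1) := by
  have h := coeff_eq_zero_of_degree_lt
    (degree_apply_lt_of_degree_le hb0 hmon hdeg hA (degree_sub_coeff_smul_le hmon hdeg hp))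
  rw [map_sub, map_smul, hA, coeff_sub, coeff_smul, coeff_smul, Nat.add_sub_cancel,
    coeff_self_of_monic hmon hdeg, sub_eq_zero] at h
  simp [h, mul_comm]

theorem coeff_apply_of_degree_le_add_two (hb0 : b 0 = 0) (hmon : ∀ n, (P n).Monic)
    (hdeg : ∀ n, (P n).natDegree = n) (hA : ∀ n, A (P n) = b n • P (n - 1)) {p : R[X]} {m : ℕ}
    (hp : p.degree ≤ ↑(m + 2)) :
    (A p).coeff m = b (m + 2) * p.coeff (m + 2) * (P (m + 1)).coeff m +
      b (m + 1) * (p.coeff (m + 1) - p.coeff (m + 2) * (P (m + 2)).coeff (m + 1)) := by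
  have h := coeff_apply_of_degree_le hb0 hmon hdeg hA (degree_sub_coeff_smul_le hmon hdeg hp)
  rw [map_sub, map_smul, hA, coeff_sub, coeff_smul, coeff_smul, coeff_sub, coeff_smul] at h
  simp only [smul_eq_mul, Nat.add_sub_cancel] at h
  linear_combination h

theorem coeff_relation_of_commute (hb0 : b 0 = 0) (hmon : ∀ n, (P n).Monic)
    (hdeg : ∀ n, (P n).natDegree = n) (hD : ∀ n, D (X ^ n) = b n • X ^ (n - 1))
    (hA : ∀ n, A (P n) = b n • P (n - 1)) (hcomm : A * D = D * A) (m : ℕ) :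
    b (m + 3) * b (m + 2) * (P (m + 1)).coeff m +
      b (m + 1) * (b (m + 2) * (P (m + 3)).coeff (m + 2) - b (m + 3) * (P (m + 2)).coeff (m + 1)) =
      b (m + 3) * b (m + 1) * (P (m + 2)).coeff (m + 1) := by
  have h := congrArg (coeff · m) (LinearMap.congr_fun hcomm (P (m + 3)))
  have hDP : (D (P (m + 3))).degree ≤ ↑(m + 2) :=
    degree_apply_le_of_apply_X_pow hb0 hD (degree_le_of_natDegree_le (hdeg _).le)
  simp only [Module.End.mul_apply] at h
  rw [coeff_apply_of_degree_le_add_two hb0 hmon hdeg hA hDP, coeff_apply_of_apply_X_pow hb0 hD,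
    coeff_apply_of_apply_X_pow hb0 hD, coeff_apply_of_apply_X_pow hb0 hD, hA, coeff_smul,
    coeff_self_of_monic hmon hdeg, show m + 3 - 1 = m + 2 from rfl, smul_eq_mul] at h
  linear_combination h

end Lowering

section FallingFactorial

variable {R : Type*} [CommRing R]

def SubleadingRel (b : ℕ → R) (m : ℕ) : Prop :=
  b (m + 3) * (2 * b (m + 1) * ∑ k ∈ range (m + 2), b k - b (m + 2) * ∑ k ∈ range (m + 1), b k) =
    b (m + 2) * b (m + 1) * ∑ k ∈ range (m + 3), b k

theorem coeff_prod_range_succ_X_sub_C (a : ℕ → R) (n : ℕ) :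
    (∏ k ∈ range (n + 1), (X - C (a k))).coeff n = -∑ k ∈ range (n + 1), a k := by
  simpa using prod_X_sub_C_coeff_card_pred (range (n + 1)) a (by simp)

variable [Nontrivial R] {a : ℕ → R} {P : ℕ → R[X]} {D A : Module.End R R[X]}

theorem subleadingRel_of_commute (ha0 : a 0 = 0) (hP : ∀ n, P n = ∏ k ∈ range n, (X - C (a k)))
    (hD : ∀ n, D (X ^ n) = a n • X ^ (n - 1)) (hA : ∀ n, A (P n) = a n • P (n - 1))
    (hcomm : A * D = D * A) (m : ℕ) : SubleadingRel a m := by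
  have hmon (n : ℕ) : (P n).Monic := hP n ▸ monic_prod_X_sub_C a _
  have hdeg (n : ℕ) : (P n).natDegree = n := by simp [hP]
  have h := coeff_relation_of_commute ha0 hmon hdeg hD hA hcomm m
  rw [hP, hP, hP, coeff_prod_range_succ_X_sub_C, coeff_prod_range_succ_X_sub_C,
    coeff_prod_range_succ_X_sub_C] at h
  simp only [Nat.add_assoc, Nat.reduceAdd] at h
  unfold SubleadingRel
  linear_combination h

theorem coeff_zero_relation_of_commute (ha0 : a 0 = 0) (ha1 : a 1 = 1)
    (hP : ∀ n, P n = ∏ k ∈ range n, (X - C (a k)))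
    (hD : ∀ n, D (X ^ n) = a n • X ^ (n - 1)) (hA : ∀ n, A (P n) = a n • P (n - 1))
    (hcomm : A * D = D * A) :
    a 2 * (a 2 + a 3 + a 2 * a 3) + a 4 - a 3 * (1 + a 2 + a 3) = a 2 * a 4 := by
  have hmon (n : ℕ) : (P n).Monic := hP n ▸ monic_prod_X_sub_C a _
  have hdeg (n : ℕ) : (P n).natDegree = n := by simp [hP]
  have h := congrArg (coeff · 0) (LinearMap.congr_fun hcomm (P 4))
  have hDP : (D (P 4)).degree ≤ ((2 + 1 : ℕ) : WithBot ℕ) :=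
    degree_apply_le_of_apply_X_pow ha0 hD (degree_le_of_natDegree_le (hdeg 4).le)
  have hq := degree_sub_coeff_smul_le hmon hdeg hDP
  simp only [Module.End.mul_apply] at h
  -- `D P_4 = [4] P_3 + q` with `deg q ≤ 2`, and `A P_3 = [3] P_2` has no constant term.
  rw [← sub_add_cancel (D (P 4)) ((D (P 4)).coeff (2 + 1) • P (2 + 1)), map_add, map_smul, hA,
    coeff_add, coeff_smul, coeff_apply_of_degree_le_add_two (m := 0) ha0 hmon hdeg hA hq] at h
  simp only [coeff_apply_of_apply_X_pow ha0 hD, hA, coeff_sub, coeff_smul] at h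
  simp [hP, prod_range_succ, coeff_mul_X_sub_C, coeff_one, coeff_X, ha0, ha1] at h
  linear_combination h

end FallingFactorial

theorem eq_of_subleadingRel {R : Type*} [CommRing R] [IsDomain R] {β γ : ℕ → R}
    (hβ : ∀ m, SubleadingRel β m) (hγ : ∀ m, SubleadingRel γ m)
    (hγ_ne : ∀ m,
      2 * γ (m + 1) * ∑ k ∈ range (m + 2), γ k - γ (m + 2) * ∑ k ∈ range (m + 1), γ k ≠ 0)
    (h0 : β 0 = γ 0) (h1 : β 1 = γ 1) (h2 : β 2 = γ 2) : β = γ := by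
  funext n
  induction n using Nat.strong_induction_on with
  | _ n ih =>
    match n, ih with
    | 0, _ => exact h0
    | 1, _ => exact h1
    | 2, _ => exact h2
    | m + 3, ih =>
      have hsum (j : ℕ) (hj : j ≤ m + 3) : ∑ k ∈ range j, β k = ∑ k ∈ range j, γ k :=
        sum_congr rfl fun k hk => ih k (by rw [mem_range] at hk; omega)
      have hβm := hβ m
      unfold SubleadingRel at hβm
      rw [hsum _ (by omega), hsum _ (by omega), hsum _ (by omega), ih (m + 1) (by omega),
        ih (m + 2) (by omega)] at hβm
      exact mul_right_cancel₀ (hγ_ne m) (hβm.trans (hγ m).symm)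

theorem sum_range_natCast (n : ℕ) : ∑ k ∈ range n, (k : ℝ) = n * (n - 1) / 2 := by
  induction n with
  | zero => simp
  | succ n ih => rw [sum_range_succ, ih]; push_cast; ring

theorem subleadingRel_natCast (m : ℕ) : SubleadingRel (fun n : ℕ => (n : ℝ)) m := by
  unfold SubleadingRel
  simp only [sum_range_natCast]
  push_cast
  ring

theorem sum_range_ite_eq_zero (n : ℕ) :
    ∑ k ∈ range (n + 1), (if k = 0 then (0 : ℝ) else 1) = n := by
  simp [sum_range_succ']

theorem subleadingRel_ite_eq_zero (m : ℕ) :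
    SubleadingRel (fun n : ℕ => if n = 0 then (0 : ℝ) else 1) m := by
  unfold SubleadingRel
  simp only [sum_range_ite_eq_zero, Nat.add_eq_zero_iff, one_ne_zero, OfNat.ofNat_ne_zero,
    and_false, if_false]
  push_cast
  ring

theorem eq_natCast_of_subleadingRel {β : ℕ → ℝ} (hβ : ∀ m, SubleadingRel β m) (h0 : β 0 = 0)
    (h1 : β 1 = 1) (h2 : β 2 = 2) (n : ℕ) : β n = n := by
  refine congrFun (eq_of_subleadingRel hβ subleadingRel_natCast (fun m => ?_) (by simp [h0])
    (by simp [h1]) (by simp [h2])) n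
  simp only [sum_range_natCast]
  push_cast
  ring_nf
  positivity

theorem eq_one_of_subleadingRel {β : ℕ → ℝ} (hβ : ∀ m, SubleadingRel β m) (h0 : β 0 = 0)
    (h1 : β 1 = 1) (h2 : β 2 = 1) {n : ℕ} (hn : 1 ≤ n) : β n = 1 := by
  have h := eq_of_subleadingRel hβ subleadingRel_ite_eq_zero (fun m => ?_) (by simp [h0])
    (by simp [h1]) (by simp [h2])
  · simpa [Nat.one_le_iff_ne_zero.1 hn] using congrFun h n
  simp only [sum_range_ite_eq_zero, Nat.add_eq_zero_iff, one_ne_zero, OfNat.ofNat_ne_zero,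
    and_false, if_false]
  push_cast
  ring_nf
  positivity

theorem eq_one_or_eq_two_of_subleadingRel {β : ℕ → ℝ} (hβ0 : β 0 = 0) (hβ1 : β 1 = 1)
    (hβ2 : 0 < β 2) (h0 : SubleadingRel β 0) (h1 : SubleadingRel β 1)
    (h4 : β 2 * (β 2 + β 3 + β 2 * β 3) + β 4 - β 3 * (1 + β 2 + β 3) = β 2 * β 4) :
    β 2 = 1 ∨ β 2 = 2 := by
  unfold SubleadingRel at h0 h1
  simp only [sum_range_succ, sum_range_zero, hβ0, hβ1] at h0 h1
  have h3 : 2 * β 3 = β 2 * (1 + β 2) := by linear_combination h0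
  have hβ3 : 0 < β 3 := by nlinarith
  have h4' : 3 * β 4 = β 2 * (1 + β 2 + β 3) :=
    mul_left_cancel₀ hβ3.ne' (by linear_combination h1 + 2 * β 4 * h3)
  have key : β 2 * (β 2 - 1) ^ 2 * (β 2 - 2) = 0 := by
    linear_combination 12 * h4 - 4 * (1 - β 2) * h4' - (β 2 ^ 2 - β 2 - 6 * β 3 - 6) * h3
  rcases mul_eq_zero.1 key with h | h
  · rcases mul_eq_zero.1 h with h | h
    · exact absurd h hβ2.ne'
    · exact Or.inl (sub_eq_zero.1 (pow_eq_zero_iff two_ne_zero |>.1 h))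
  · exact Or.inr (sub_eq_zero.1 h)

/-- the β-falling-factorial sequence `P_n(x) = ∏_{k=0}^{n-1}(x − [k]_β)` is a
β-binomial sequence (i.e. its lowering operator commutes with `D_β`) only in the classical
case `[n]_β = n` and in the free case `[n]_β = 1` for `n ≥ 1`. -/
theorem stmt_18 (β : ℕ → ℝ) (hβ0 : β 0 = 0) (hβ1 : β 1 = 1) (hβpos : ∀ n, 1 ≤ n → 0 < β n)
    (P : ℕ → Polynomial ℂ)
    (hP : ∀ n : ℕ, P n = ∏ k ∈ Finset.range n, (Polynomial.X - Polynomial.C ((β k : ℂ))))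
    (D A : Module.End ℂ (Polynomial ℂ))
    (hD : ∀ n : ℕ, D (Polynomial.X ^ n) = ((β n : ℂ)) • Polynomial.X ^ (n - 1))
    (hA : ∀ n : ℕ, A (P n) = ((β n : ℂ)) • P (n - 1))
    (hcomm : A * D = D * A) :
    (∀ n : ℕ, β n = n) ∨ (∀ n : ℕ, 1 ≤ n → β n = 1) := by
  have hb0 : ((β 0 : ℝ) : ℂ) = 0 := by simp [hβ0]
  have hb1 : ((β 1 : ℝ) : ℂ) = 1 := by simp [hβ1]
  have hrec (m : ℕ) : SubleadingRel β m := by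
    have h := subleadingRel_of_commute (a := fun n => (β n : ℂ)) hb0 hP hD hA hcomm m
    unfold SubleadingRel at h ⊢
    beta_reduce at h
    exact_mod_cast h
  have h4 : β 2 * (β 2 + β 3 + β 2 * β 3) + β 4 - β 3 * (1 + β 2 + β 3) = β 2 * β 4 := by
    exact_mod_cast coeff_zero_relation_of_commute (a := fun n => (β n : ℂ)) hb0 hb1 hP hD hA hcomm
  rcases eq_one_or_eq_two_of_subleadingRel hβ0 hβ1 (hβpos 2 (by norm_num)) (hrec 0) (hrec 1) h4
    with h2 | h2
  · exact Or.inr fun n hn => eq_one_of_subleadingRel hrec hβ0 hβ1 h2 hn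
  · exact Or.inl (eq_natCast_of_subleadingRel hrec hβ0 hβ1 h2)
end
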